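/- arXiv:1507.02344 — 12 statements merged into one kernel-verified Lean document; each statement's English description precedes it below -/
import Mathlib

section
/- Let F be a posheaf on a frame O(X) and S a subsheaf of F. Define ↓S by ↓S(u) = {x ∈ F(u) : there exist a family (u_i)_{i∈I} in O(X) with ⋁ u_i = u and elements x_i ∈ S(u_i) with x|_{u_i} ≤ x_i for all i}. Then ↓S is a downsheaf of F containing S, and for every downsheaf G of F one has S ⊆ G if and only if ↓S ⊆ G (containment meaning S(u) ⊆ G(u) for all u); that is, ↓( ) is left adjoint to the inclusion of downsheaves into subsheaves. -/
universe u v w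

variable {X : Type u} [Order.Frame X]

/-- A partially ordered sheaf (posheaf) on a frame `X`. -/
structure Posheaf (X : Type u) [Order.Frame X] where
  obj : X → Type v
  order : ∀ a, PartialOrder (obj a)
  res : ∀ {a b : X}, b ≤ a → obj a → obj b
  res_self : ∀ (a : X) (x : obj a), res (le_refl a) x = x
  res_comp : ∀ {a b c : X} (h₁ : c ≤ b) (h₂ : b ≤ a) (x : obj a),
    res h₁ (res h₂ x) = res (h₁.trans h₂) x
  res_mono : ∀ {a b : X} (h : b ≤ a) (x y : obj a),
    (order a).le x y → (order b).le (res h x) (res h y)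
  isSheaf : ∀ {ι : Type w} (c : ι → X) (s : ∀ i, obj (c i)),
    (∀ i j, res (inf_le_left : c i ⊓ c j ≤ c i) (s i)
          = res (inf_le_right : c i ⊓ c j ≤ c j) (s j)) →
    ∃! t : obj (⨆ i, c i), ∀ i, res (le_iSup c i) t = s i
  pos3 : ∀ {ι : Type w} (c : ι → X) (s t : ∀ i, obj (c i)),
    (∀ i j, res (inf_le_left : c i ⊓ c j ≤ c i) (s i)
          = res (inf_le_right : c i ⊓ c j ≤ c j) (s j)) →
    (∀ i j, res (inf_le_left : c i ⊓ c j ≤ c i) (t i)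
          = res (inf_le_right : c i ⊓ c j ≤ c j) (t j)) →
    (∀ i, (order (c i)).le (s i) (t i)) →
    ∀ (a b : obj (⨆ i, c i)),
      (∀ i, res (le_iSup c i) a = s i) → (∀ i, res (le_iSup c i) b = t i) →
      (order (⨆ i, c i)).le a b

attribute [instance] Posheaf.order

/-- A point of a sheaf: a pair `(w, x)` with `x ∈ F(w)`. -/
abbrev Posheaf.Pt (F : Posheaf.{u, v, w} X) := Σ a : X, F.obj a

/-- The order on points. -/
def Posheaf.ptLE (F : Posheaf.{u, v, w} X) (p q : F.Pt) : Prop :=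
  ∃ h : p.1 ≤ q.1, p.2 ≤ F.res h q.2

/-- A morphism of sheaves. -/
structure Posheaf.Hom (F G : Posheaf.{u, v, w} X) where
  app : ∀ a, F.obj a → G.obj a
  natural : ∀ {a b : X} (h : b ≤ a) (x : F.obj a),
    app b (F.res h x) = G.res h (app a x)

/-- The action of a morphism on points. -/
def Posheaf.Hom.pt {F G : Posheaf.{u, v, w} X} (α : F.Hom G) (p : F.Pt) : G.Pt :=
  ⟨p.1, α.app p.1 p.2⟩

/-- A subsheaf of a posheaf: a family of subsets closed under restriction such
that every compatible family of elements of the subsheaf patches in `F` to an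
element of the subsheaf. -/
structure Posheaf.Subsheaf (F : Posheaf.{u, v, w} X) where
  carrier : ∀ a : X, Set (F.obj a)
  res_mem : ∀ {a b : X} (h : b ≤ a) {x : F.obj a}, x ∈ carrier a → F.res h x ∈ carrier b
  patch_mem : ∀ {ι : Type w} (c : ι → X) (s : ∀ i, F.obj (c i)),
    (∀ i, s i ∈ carrier (c i)) →
    (∀ i j, F.res (inf_le_left : c i ⊓ c j ≤ c i) (s i)
          = F.res (inf_le_right : c i ⊓ c j ≤ c j) (s j)) →
    ∀ t : F.obj (⨆ i, c i), (∀ i, F.res (le_iSup c i) t = s i) → t ∈ carrier (⨆ i, c i)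

/-- A subsheaf `S` of a posheaf `F` is a downsheaf if whenever `p ≤ p'` are
points of `F` and `p'` is a point of `S`, then `p` is a point of `S`. -/
def Posheaf.Subsheaf.IsDownsheaf {F : Posheaf.{u, v, w} X} (S : F.Subsheaf) : Prop :=
  ∀ p q : F.Pt, F.ptLE p q → q.2 ∈ S.carrier q.1 → p.2 ∈ S.carrier p.1

/-- The family `↓S`: `↓S(u)` consists of those `x ∈ F(u)` for which there is a
family `(u_i)` with `⋁ u_i = u` and elements `x_i ∈ S(u_i)` with
`x|_{u_i} ≤ x_i` for all `i`. -/
def Posheaf.downGen (F : Posheaf.{u, v, w} X) (S : F.Subsheaf) (a : X) : Set (F.obj a) :=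
  {x | ∃ (ι : Type w) (c : ι → X) (hc : ∀ i, c i ≤ a),
        (⨆ i, c i) = a ∧
        ∃ y : ∀ i, F.obj (c i),
          (∀ i, y i ∈ S.carrier (c i)) ∧ ∀ i, F.res (hc i) x ≤ y i}

/-- `↓S` is a downsheaf of `F` containing `S`, and for every
downsheaf `G` of `F`, `S ⊆ G` iff `↓S ⊆ G`; i.e. `↓( )` is left adjoint to the
inclusion of downsheaves into subsheaves. -/
theorem downGen_isDownsheaf_and_adjoint
    (F : Posheaf.{u, v, w} X) (S : F.Subsheaf) :
    -- `↓S` is closed under restriction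
    (∀ {a b : X} (h : b ≤ a) (x : F.obj a),
        x ∈ F.downGen S a → F.res h x ∈ F.downGen S b) ∧
    -- `↓S` is closed under patching of compatible families
    (∀ {ι : Type w} (c : ι → X) (s : ∀ i, F.obj (c i)),
        (∀ i, s i ∈ F.downGen S (c i)) →
        (∀ i j, F.res (inf_le_left : c i ⊓ c j ≤ c i) (s i)
              = F.res (inf_le_right : c i ⊓ c j ≤ c j) (s j)) →
        ∀ t : F.obj (⨆ i, c i), (∀ i, F.res (le_iSup c i) t = s i) →
          t ∈ F.downGen S (⨆ i, c i)) ∧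
    -- `↓S` is a down-set on points
    (∀ p q : F.Pt, F.ptLE p q → q.2 ∈ F.downGen S q.1 → p.2 ∈ F.downGen S p.1) ∧
    -- `S ⊆ ↓S`
    (∀ a : X, S.carrier a ⊆ F.downGen S a) ∧
    -- Galois property with respect to downsheaves
    (∀ G : F.Subsheaf, G.IsDownsheaf →
      ((∀ a : X, S.carrier a ⊆ G.carrier a) ↔ (∀ a : X, F.downGen S a ⊆ G.carrier a))) := by
  have res_part : ∀ {a b : X} (h : b ≤ a) (x : F.obj a),
      x ∈ F.downGen S a → F.res h x ∈ F.downGen S b := by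
    intro a b h x hx
    obtain ⟨ι, c, hc, hsup, y, hy, hle⟩ := hx
    refine ⟨ι, fun i => c i ⊓ b, fun i => inf_le_right, ?_,
      fun i => F.res inf_le_left (y i), fun i => S.res_mem _ (hy i), ?_⟩
    · rw [← iSup_inf_eq, hsup, inf_eq_right.mpr h]
    · intro i
      have h1 : F.res (inf_le_right : c i ⊓ b ≤ b) (F.res h x)
          = F.res (inf_le_left : c i ⊓ b ≤ c i) (F.res (hc i) x) := by
        rw [F.res_comp, F.res_comp]
      rw [h1]
      exact F.res_mono _ _ _ (hle i)
  refine ⟨res_part, ?_, ?_, ?_, ?_⟩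
  · intro ι c s hs hcompat t ht
    choose ι' d hd hsup y hy hle using hs
    refine ⟨(Σ i, ι' i), fun p => d p.1 p.2,
      fun p => (hd p.1 p.2).trans (le_iSup c p.1), ?_, fun p => y p.1 p.2,
      fun p => hy p.1 p.2, ?_⟩
    · rw [iSup_sigma]
      exact iSup_congr hsup
    · rintro ⟨i, k⟩
      have h1 : F.res ((hd i k).trans (le_iSup c i)) t
          = F.res (hd i k) (s i) := by
        rw [← ht i, F.res_comp]
      rw [h1]
      exact hle i k
  · rintro ⟨b, xb⟩ ⟨a, xa⟩ ⟨h, hpq⟩ hq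
    obtain ⟨ι, c, hc, hsup, y, hy, hle⟩ := res_part h xa hq
    refine ⟨ι, c, hc, hsup, y, hy, fun i => ?_⟩
    exact le_trans (F.res_mono (hc i) _ _ hpq) (hle i)
  · intro a x hx
    refine ⟨PUnit, fun _ => a, fun _ => le_refl a, iSup_const, fun _ => x,
      fun _ => hx, fun _ => ?_⟩
    rw [F.res_self]
  · intro G hG
    constructor
    · intro hSG a x hx
      obtain ⟨ι, c, hc, hsup, y, hy, hle⟩ := hx
      subst hsup
      have hmem : ∀ i, F.res (hc i) x ∈ G.carrier (c i) := by
        intro i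
        refine hG ⟨c i, F.res (hc i) x⟩ ⟨c i, y i⟩ ⟨le_refl _, ?_⟩ (hSG _ (hy i))
        rw [F.res_self]
        exact hle i
      refine G.patch_mem c (fun i => F.res (hc i) x) hmem ?_ x (fun i => rfl)
      intro i j
      rw [F.res_comp, F.res_comp]
    · intro hDG a x hx
      exact hDG a (⟨PUnit, fun _ => a, fun _ => le_refl a, iSup_const, fun _ => x,
        fun _ => hx, fun _ => by rw [F.res_self]⟩)
end

section
/- Let F be a posheaf on a frame O(X) such that every restriction map F(u) → F(v) (v ≤ u) is surjective and has a left adjoint l_{vu} : F(v) → F(u). Then for all u, v ∈ O(X) and every x ∈ F(v): (l_{v, u∨v}(x))|_u = l_{u∧v, u}(x|_{u∧v}), where l_{v, u∨v} : F(v) → F(u ∨ v) and l_{u∧v, u} : F(u ∧ v) → F(u) are the left adjoints of the corresponding restriction maps. -/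
universe u v w

variable {X : Type u} [Order.Frame X]

/-- Auxiliary: a two-element family. -/
def glueFam (F : Posheaf.{u, v, w} X) {a b : X} (ra : F.obj a) (rb : F.obj b) :
    ∀ i : ULift.{w} Bool, F.obj (if i.down then a else b) :=
  fun i => match i with | ⟨true⟩ => ra | ⟨false⟩ => rb

/-- If every restriction map of a posheaf `F` is surjective and
has a left adjoint `l`, then for all `u v` and `x ∈ F(v)`:
`(l_{v,u∨v} x)|_u = l_{u∧v,u} (x|_{u∧v})`. -/
theorem left_adjoints_of_restrictions_commute
    (F : Posheaf.{u, v, w} X)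
    (hsurj : ∀ {a b : X} (h : b ≤ a), Function.Surjective (F.res h))
    (l : ∀ {a b : X}, b ≤ a → F.obj b → F.obj a)
    (hadj : ∀ {a b : X} (h : b ≤ a) (x : F.obj b) (y : F.obj a),
      l h x ≤ y ↔ x ≤ F.res h y)
    (a b : X) (x : F.obj b) :
    F.res (le_sup_left : a ≤ a ⊔ b) (l (le_sup_right : b ≤ a ⊔ b) x)
      = l (inf_le_left : a ⊓ b ≤ a) (F.res (inf_le_right : a ⊓ b ≤ b) x) := by
  -- counit is the identity (uses surjectivity)
  have counit : ∀ {p q : X} (h : q ≤ p) (y : F.obj q), F.res h (l h y) = y := by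
    intro p q h y
    obtain ⟨z, hz⟩ := hsurj h y
    apply le_antisymm
    · have h1 : l h y ≤ z := (hadj h y z).2 (le_of_eq hz.symm)
      have := F.res_mono h _ _ h1
      rw [hz] at this
      exact this
    · exact (hadj h y (l h y)).1 le_rfl
  have unit : ∀ {p q : X} (h : q ≤ p) (y : F.obj q), y ≤ F.res h (l h y) :=
    fun h y => (hadj h y (l h y)).1 le_rfl
  set R : F.obj a := l inf_le_left (F.res inf_le_right x) with hR
  -- easy direction : R ≤ LHS
  have hRL : R ≤ F.res le_sup_left (l le_sup_right x) := by
    rw [hR, hadj, F.res_comp]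
    exact (F.res_comp inf_le_right le_sup_right (l le_sup_right x)) ▸
      F.res_mono inf_le_right _ _ (unit le_sup_right x)
  -- glue R and x over a ⊔ b
  let c : ULift.{w} Bool → X := fun i => if i.down then a else b
  have compat : ∀ i j, F.res (inf_le_left : c i ⊓ c j ≤ c i) (glueFam F R x i)
    = F.res (inf_le_right : c i ⊓ c j ≤ c j) (glueFam F R x j) := by
    rintro ⟨_ | _⟩ ⟨_ | _⟩
    · rfl
    · -- i = false (b), j = true (a)
      have hba : b ⊓ a ≤ a ⊓ b := le_inf inf_le_right inf_le_left
      exact (F.res_comp hba inf_le_right x).symm.trans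
        ((congrArg (F.res hba) (counit inf_le_left _).symm).trans
          (F.res_comp hba inf_le_left R))
    · -- i = true (a), j = false (b)
      exact counit inf_le_left _
    · rfl
  obtain ⟨t, ht, -⟩ := F.isSheaf c (glueFam F R x) compat
  have ha : a ≤ ⨆ i, c i := le_iSup c ⟨true⟩
  have hb : b ≤ ⨆ i, c i := le_iSup c ⟨false⟩
  have hab : a ⊔ b ≤ ⨆ i, c i := sup_le ha hb
  have h1 : l le_sup_right x ≤ F.res hab t := by
    rw [hadj, F.res_comp]
    exact le_of_eq (ht ⟨false⟩).symm
  have h2 : F.res le_sup_left (l le_sup_right x) ≤ R := by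
    have h3 := F.res_mono le_sup_left _ _ h1
    rw [F.res_comp] at h3
    exact le_of_le_of_eq h3 (ht ⟨true⟩)
  exact le_antisymm h2 hRL
end

section
/- Let F be a posheaf on a frame O(X) with top element ⊤. Then the following are equivalent: (1) for every downsheaf S of F there exists p ∈ F(⊤) such that for every u ∈ O(X), p|_u is the least element t of F(u) satisfying x ≤ t|_v for all v ≤ u and all x ∈ S(v); (2) the same conclusion holds for every subsheaf S of F; (3) every F(u) is a complete lattice, and for all v ≤ u the restriction map F(u) → F(v) is surjective and has both a left adjoint and a right adjoint. -/
universe u v w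

variable {X : Type u} [Order.Frame X]

namespace Posheaf

variable {F : Posheaf.{u, v, w} X}

lemma res_res {a b c : X} (h₁ : c ≤ b) (h₂ : b ≤ a) (x : F.obj a) :
    F.res h₁ (F.res h₂ x) = F.res (h₁.trans h₂) x := F.res_comp h₁ h₂ x

lemma res_refl {a : X} (h : a ≤ a) (x : F.obj a) : F.res h x = x := F.res_self a x

lemma compat_mono {ι : Type w} {c : ι → X} {s : ∀ i, F.obj (c i)}
    (hc : ∀ i j, F.res (inf_le_left : c i ⊓ c j ≤ c i) (s i)
        = F.res (inf_le_right : c i ⊓ c j ≤ c j) (s j))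
    {i j : ι} {d : X} (h₁ : d ≤ c i) (h₂ : d ≤ c j) :
    F.res h₁ (s i) = F.res h₂ (s j) :=
  calc F.res h₁ (s i)
      = F.res (le_inf h₁ h₂) (F.res inf_le_left (s i)) := (res_res _ _ _).symm
    _ = F.res (le_inf h₁ h₂) (F.res inf_le_right (s j)) := by rw [hc i j]
    _ = F.res h₂ (s j) := res_res _ _ _

lemma res_radj {a b : X} (h : b ≤ a) {r : F.obj b → F.obj a}
    (hr : ∀ x y, F.res h x ≤ y ↔ x ≤ r y) (hsurj : Function.Surjective (F.res h))
    (y : F.obj b) : F.res h (r y) = y := by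
  obtain ⟨x, rfl⟩ := hsurj y
  exact le_antisymm ((hr _ _).mpr le_rfl) (F.res_mono h _ _ ((hr _ _).mp le_rfl))

lemma res_ladj {a b : X} (h : b ≤ a) {l : F.obj b → F.obj a}
    (hl : ∀ x y, l x ≤ y ↔ x ≤ F.res h y) (hsurj : Function.Surjective (F.res h))
    (y : F.obj b) : F.res h (l y) = y := by
  obtain ⟨x, rfl⟩ := hsurj y
  exact le_antisymm (F.res_mono h _ _ ((hl _ _).mpr le_rfl)) ((hl _ _).mp le_rfl)

lemma res_isLUB {a b : X} (h : b ≤ a) {r : F.obj b → F.obj a}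
    (hr : ∀ x y, F.res h x ≤ y ↔ x ≤ r y) {A : Set (F.obj a)} {s : F.obj a}
    (hs : IsLUB A s) : IsLUB (F.res h '' A) (F.res h s) := by
  constructor
  · rintro _ ⟨x, hx, rfl⟩
    exact F.res_mono h _ _ (hs.1 hx)
  · intro u hu
    exact (hr s u).mpr (hs.2 (fun x hx => (hr x u).mp (hu ⟨x, hx, rfl⟩)))

/-- The downward closure of a single point, as a subsheaf. -/
def downSub (F : Posheaf.{u, v, w} X) {b : X} (y : F.obj b) : F.Subsheaf where
  carrier c := {z | ∃ h : c ≤ b, z ≤ F.res h y}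
  res_mem := by
    intro c c' h' z hz
    obtain ⟨h, hz⟩ := hz
    refine ⟨h'.trans h, ?_⟩
    calc F.res h' z ≤ F.res h' (F.res h y) := F.res_mono h' _ _ hz
      _ = F.res (h'.trans h) y := res_res _ _ _
  patch_mem := by
    intro ι c s hs hcomp t ht
    have hub : ∀ i, c i ≤ b := fun i => (hs i).choose
    refine ⟨iSup_le hub, ?_⟩
    exact F.pos3 c s (fun i => F.res (hub i) y) hcomp
      (fun i j => by rw [res_res, res_res])
      (fun i => (hs i).choose_spec)
      t (F.res (iSup_le hub) y) ht (fun i => res_res _ _ _)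

lemma downSub_isDownsheaf {b : X} (y : F.obj b) : (F.downSub y).IsDownsheaf := by
  rintro p q ⟨hpq, hle⟩ ⟨h, hq⟩
  refine ⟨hpq.trans h, ?_⟩
  calc p.2 ≤ F.res hpq q.2 := hle
    _ ≤ F.res hpq (F.res h y) := F.res_mono hpq _ _ hq
    _ = F.res (hpq.trans h) y := res_res _ _ _

/-- The subsheaf of local elements dominated by every upper bound of `A`. -/
def ubSub (F : Posheaf.{u, v, w} X) {a : X} (A : Set (F.obj a)) : F.Subsheaf where
  carrier c := {z | ∃ h : c ≤ a, ∀ u ∈ upperBounds A, z ≤ F.res h u}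
  res_mem := by
    intro c c' h' z hz
    obtain ⟨h, hz⟩ := hz
    refine ⟨h'.trans h, fun u hu => ?_⟩
    calc F.res h' z ≤ F.res h' (F.res h u) := F.res_mono h' _ _ (hz u hu)
      _ = F.res (h'.trans h) u := res_res _ _ _
  patch_mem := by
    intro ι c s hs hcomp t ht
    have hub : ∀ i, c i ≤ a := fun i => (hs i).choose
    refine ⟨iSup_le hub, fun u hu => ?_⟩
    exact F.pos3 c s (fun i => F.res (hub i) u) hcomp
      (fun i j => by rw [res_res, res_res])
      (fun i => (hs i).choose_spec u hu)
      t (F.res (iSup_le hub) u) ht (fun i => res_res _ _ _)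

lemma ubSub_isDownsheaf {a : X} (A : Set (F.obj a)) : (F.ubSub A).IsDownsheaf := by
  rintro p q ⟨hpq, hle⟩ ⟨h, hq⟩
  refine ⟨hpq.trans h, fun u hu => ?_⟩
  calc p.2 ≤ F.res hpq q.2 := hle
    _ ≤ F.res hpq (F.res h u) := F.res_mono hpq _ _ (hq u hu)
    _ = F.res (hpq.trans h) u := res_res _ _ _

/-- The subsheaf of local elements whose restriction below `b` lies below `y`;
its supremum is the value of the right adjoint to restriction at `y`. -/
def adjSub (F : Posheaf.{u, v, w} X) {a b : X} (hba : b ≤ a) (y : F.obj b) : F.Subsheaf where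
  carrier c := {z | ∃ h : c ≤ a, ∀ (d : X) (h₁ : d ≤ c) (h₂ : d ≤ b), F.res h₁ z ≤ F.res h₂ y}
  res_mem := by
    intro c c' h' z hz
    obtain ⟨h, hz⟩ := hz
    refine ⟨h'.trans h, fun d h₁ h₂ => ?_⟩
    rw [res_res]
    exact hz d (h₁.trans h') h₂
  patch_mem := by
    intro ι c s hs hcomp t ht
    have hub : ∀ i, c i ≤ a := fun i => (hs i).choose
    refine ⟨iSup_le hub, fun d h₁ h₂ => ?_⟩
    have hm₁ : (⨆ i, d ⊓ c i) ≤ d := iSup_le fun i => inf_le_left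
    have hm₂ : d ≤ ⨆ i, d ⊓ c i := by
      rw [← inf_iSup_eq]
      exact le_inf le_rfl h₁
    have key : F.res hm₁ (F.res h₁ t) ≤ F.res (hm₁.trans h₂) y := by
      refine F.pos3 (fun i => d ⊓ c i)
        (fun i => F.res (inf_le_right : d ⊓ c i ≤ c i) (s i))
        (fun i => F.res (inf_le_left.trans h₂ : d ⊓ c i ≤ b) y)
        (fun i j => by rw [res_res, res_res]; exact compat_mono hcomp _ _)
        (fun i j => by rw [res_res, res_res])
        (fun i => (hs i).choose_spec (d ⊓ c i) inf_le_right (inf_le_left.trans h₂))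
        (F.res hm₁ (F.res h₁ t)) (F.res (hm₁.trans h₂) y)
        (fun i => ?_) (fun i => ?_)
      · show F.res (le_iSup (fun i => d ⊓ c i) i) (F.res hm₁ (F.res h₁ t))
            = F.res (inf_le_right : d ⊓ c i ≤ c i) (s i)
        rw [res_res, res_res, ← ht i, res_res]
      · show F.res (le_iSup (fun i => d ⊓ c i) i) (F.res (hm₁.trans h₂) y)
            = F.res (inf_le_left.trans h₂ : d ⊓ c i ≤ b) y
        rw [res_res]
    have h5 := F.res_mono hm₂ _ _ key
    rw [res_res, res_res, res_res] at h5
    exact h5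

lemma adjSub_isDownsheaf {a b : X} (hba : b ≤ a) (y : F.obj b) :
    (F.adjSub hba y).IsDownsheaf := by
  rintro p q ⟨hpq, hle⟩ ⟨h, hq⟩
  refine ⟨hpq.trans h, fun d h₁ h₂ => ?_⟩
  calc F.res h₁ p.2 ≤ F.res h₁ (F.res hpq q.2) := F.res_mono h₁ _ _ hle
    _ = F.res (h₁.trans hpq) q.2 := res_res _ _ _
    _ ≤ F.res h₂ y := hq d (h₁.trans hpq) h₂

/-- The Beck–Chevalley style key lemma: if `w` behaves as the left-adjoint
extension of `x` from `c` to `a`, then its restriction to `b` is dominated by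
any `t` dominating `x` on common refinements. -/
lemma key_lemma (F : Posheaf.{u, v, w} X)
    (hcl : ∀ (e : X) (A : Set (F.obj e)), ∃ s, IsLUB A s)
    (hres : ∀ {d e : X} (h : e ≤ d),
      Function.Surjective (F.res h) ∧
      (∃ l : F.obj e → F.obj d, ∀ (x : F.obj e) (y : F.obj d), l x ≤ y ↔ x ≤ F.res h y) ∧
      (∃ r : F.obj e → F.obj d, ∀ (x : F.obj d) (y : F.obj e), F.res h x ≤ y ↔ x ≤ r y))
    {a b c : X} (hb : b ≤ a) (hc : c ≤ a) (x : F.obj c) (w : F.obj a)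
    (hw : ∀ z : F.obj a, w ≤ z ↔ x ≤ F.res hc z) (t : F.obj b)
    (hxt : ∀ (d : X) (h₁ : d ≤ c) (h₂ : d ≤ b), F.res h₁ x ≤ F.res h₂ t) :
    F.res hb w ≤ t := by
  obtain ⟨r, hr⟩ := (hres (inf_le_right : b ⊓ c ≤ c)).2.2
  obtain ⟨sc, hsc⟩ := hcl c {x, r (F.res (inf_le_left : b ⊓ c ≤ b) t)}
  have hx_le : x ≤ sc := hsc.1 (Set.mem_insert _ _)
  have hr_mem : r (F.res (inf_le_left : b ⊓ c ≤ b) t) ≤ sc :=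
    hsc.1 (Set.mem_insert_iff.mpr (Or.inr rfl))
  have hrr : F.res (inf_le_right : b ⊓ c ≤ c) (r (F.res inf_le_left t))
      = F.res (inf_le_left : b ⊓ c ≤ b) t :=
    F.res_radj _ hr (hres _).1 _
  have hsceq : F.res (inf_le_right : b ⊓ c ≤ c) sc = F.res (inf_le_left : b ⊓ c ≤ b) t := by
    refine le_antisymm ((hr _ _).mpr (hsc.2 ?_)) ?_
    · rintro z (rfl | rfl)
      · exact (hr _ _).mp (hxt (b ⊓ c) inf_le_right inf_le_left)
      · exact (hr _ _).mp hrr.le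
    · calc F.res inf_le_left t = F.res inf_le_right (r (F.res inf_le_left t)) := hrr.symm
        _ ≤ F.res inf_le_right sc := F.res_mono _ _ _ hr_mem
  have hC : ∀ (d : X) (h₁ : d ≤ c) (h₂ : d ≤ b), F.res h₁ sc = F.res h₂ t := fun d h₁ h₂ =>
    calc F.res h₁ sc = F.res (le_inf h₂ h₁) (F.res inf_le_right sc) := (res_res _ _ _).symm
      _ = F.res (le_inf h₂ h₁) (F.res inf_le_left t) := by rw [hsceq]
      _ = F.res h₂ t := res_res _ _ _
  -- glue `t` on `b` with `sc` on `c`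
  let fam : ULift.{w} Bool → X := fun i => @Bool.rec (fun _ => X) c b i.down
  let sec : ∀ i, F.obj (fam i) :=
    fun i => @Bool.rec (fun bb => F.obj (@Bool.rec (fun _ => X) c b bb)) sc t i.down
  have hcompat : ∀ i j, F.res (inf_le_left : fam i ⊓ fam j ≤ fam i) (sec i)
      = F.res (inf_le_right : fam i ⊓ fam j ≤ fam j) (sec j) := by
    intro i j
    obtain ⟨i⟩ := i
    obtain ⟨j⟩ := j
    cases i <;> cases j
    · rfl
    · exact hC _ inf_le_left inf_le_right
    · exact (hC _ inf_le_right inf_le_left).symm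
    · rfl
  obtain ⟨wg, hwg, -⟩ := F.isSheaf fam sec hcompat
  have he : (⨆ i, fam i) ≤ a := iSup_le fun i => by
    obtain ⟨i⟩ := i; cases i; exacts [hc, hb]
  obtain ⟨L, hL⟩ := (hres he).2.1
  have hLv : F.res he (L wg) = wg := F.res_ladj he hL (hres he).1 wg
  have h1 : w ≤ L wg := by
    refine (hw (L wg)).mpr ?_
    calc x ≤ sc := hx_le
      _ = F.res (le_iSup fam (ULift.up false)) wg := (hwg (ULift.up false)).symm
      _ = F.res (le_iSup fam (ULift.up false)) (F.res he (L wg)) := by rw [hLv]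
      _ = F.res hc (L wg) := res_res _ _ _
  calc F.res hb w ≤ F.res hb (L wg) := F.res_mono hb _ _ h1
    _ = F.res (le_iSup fam (ULift.up true)) (F.res he (L wg)) := (res_res _ _ _).symm
    _ = t := by rw [hLv]; exact hwg (ULift.up true)

lemma cond2_of_cond3 (F : Posheaf.{u, v, w} X)
    (hcl : ∀ (a : X) (A : Set (F.obj a)), ∃ s, IsLUB A s)
    (hres : ∀ {a b : X} (h : b ≤ a),
      Function.Surjective (F.res h) ∧
      (∃ l : F.obj b → F.obj a, ∀ (x : F.obj b) (y : F.obj a), l x ≤ y ↔ x ≤ F.res h y) ∧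
      (∃ r : F.obj b → F.obj a, ∀ (x : F.obj a) (y : F.obj b), F.res h x ≤ y ↔ x ≤ r y))
    (S : F.Subsheaf) :
    ∃ p : F.obj (⊤ : X), ∀ a : X,
      IsLeast {t : F.obj a | ∀ (b : X) (h : b ≤ a), ∀ x ∈ S.carrier b, x ≤ F.res h t}
        (F.res le_top p) := by
  classical
  have hT : ∀ a : X, ∃ s : F.obj a, IsLUB {w : F.obj a |
      ∃ (b : X) (h : b ≤ a) (x : F.obj b), x ∈ S.carrier b ∧
        ∀ z : F.obj a, w ≤ z ↔ x ≤ F.res h z} s := fun a => hcl a _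
  choose T hTl using hT
  have hmem : ∀ (a b : X) (h : b ≤ a), ∀ x ∈ S.carrier b, x ≤ F.res h (T a) := by
    intro a b h x hx
    obtain ⟨l, hl⟩ := (hres h).2.1
    exact (hl x (T a)).mp ((hTl a).1 ⟨b, h, x, hx, fun z => hl x z⟩)
  have hlb : ∀ (a : X) (t : F.obj a),
      (∀ (b : X) (h : b ≤ a), ∀ x ∈ S.carrier b, x ≤ F.res h t) → T a ≤ t := by
    intro a t ht
    refine (hTl a).2 ?_
    rintro w ⟨b, h, x, hx, hw⟩
    exact (hw t).mpr (ht b h x hx)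
  refine ⟨T ⊤, fun a => ?_⟩
  have heq : F.res le_top (T ⊤) = T a := by
    refine le_antisymm ?_ ?_
    · obtain ⟨r, hr⟩ := (hres (le_top : a ≤ ⊤)).2.2
      refine (F.res_isLUB le_top hr (hTl ⊤)).2 ?_
      rintro _ ⟨w, ⟨b, hb, x, hx, hw⟩, rfl⟩
      exact F.key_lemma hcl hres le_top hb x w hw (T a)
        (fun d h₁ h₂ => hmem a d h₂ (F.res h₁ x) (S.res_mem h₁ hx))
    · refine hlb a _ ?_
      intro b h x hx
      rw [res_res]
      exact hmem ⊤ b (h.trans le_top) x hx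
  rw [heq]
  exact ⟨fun b h x hx => hmem a b h x hx, fun t ht => hlb a t ht⟩

lemma cond3_of_cond1 (F : Posheaf.{u, v, w} X)
    (h1 : ∀ S : F.Subsheaf, S.IsDownsheaf →
      ∃ p : F.obj (⊤ : X), ∀ a : X,
        IsLeast {t : F.obj a | ∀ (b : X) (h : b ≤ a), ∀ x ∈ S.carrier b, x ≤ F.res h t}
          (F.res le_top p)) :
    (∀ (a : X) (A : Set (F.obj a)), ∃ s, IsLUB A s) ∧
    (∀ {a b : X} (h : b ≤ a),
      Function.Surjective (F.res h) ∧
      (∃ l : F.obj b → F.obj a, ∀ (x : F.obj b) (y : F.obj a), l x ≤ y ↔ x ≤ F.res h y) ∧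
      (∃ r : F.obj b → F.obj a, ∀ (x : F.obj a) (y : F.obj b), F.res h x ≤ y ↔ x ≤ r y)) := by
  classical
  constructor
  · intro a A
    obtain ⟨p, hp⟩ := h1 (F.ubSub A) (ubSub_isDownsheaf A)
    refine ⟨F.res le_top p, ?_, ?_⟩
    · intro x hx
      have hmem : x ∈ (F.ubSub A).carrier a :=
        ⟨le_refl a, fun u hu => by rw [res_refl]; exact hu hx⟩
      have h2 := (hp a).1 a (le_refl a) x hmem
      rwa [res_refl] at h2
    · intro t ht
      exact (hp a).2 (fun b h z hz => hz.elim (fun h' f => f t ht))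
  · intro a b h
    -- the down-closure subsheaves give surjectivity and the left adjoint
    choose p hp using fun y : F.obj b => h1 (F.downSub y) (downSub_isDownsheaf y)
    have heq : ∀ y : F.obj b, F.res le_top (p y) = y := by
      intro y
      refine le_antisymm ((hp y b).2 (fun c hc z hz => hz.elim fun h' f => f)) ?_
      have h2 := (hp y b).1 b (le_refl b) y ⟨le_refl b, (F.res_refl _ y).ge⟩
      rwa [res_refl] at h2
    refine ⟨fun y => ⟨F.res le_top (p y), by rw [res_res]; exact heq y⟩,
      ⟨fun y => F.res le_top (p y), fun x y => ⟨?_, ?_⟩⟩, ?_⟩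
    · intro hxy
      calc x = F.res h (F.res le_top (p x)) := by rw [res_res]; exact (heq x).symm
        _ ≤ F.res h y := F.res_mono h _ _ hxy
    · intro hxy
      refine (hp x a).2 ?_
      intro c hc z hz
      obtain ⟨h', f⟩ := hz
      calc z ≤ F.res h' x := f
        _ ≤ F.res h' (F.res h y) := F.res_mono h' _ _ hxy
        _ = F.res (h'.trans h) y := res_res _ _ _
    · -- right adjoint via adjSub
      choose q hq using fun y : F.obj b => h1 (F.adjSub h y) (adjSub_isDownsheaf h y)
      refine ⟨fun y => F.res le_top (q y), fun x y => ⟨?_, ?_⟩⟩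
      · intro hxy
        have hmem : x ∈ (F.adjSub h y).carrier a := by
          refine ⟨le_refl a, fun d h₁ h₂ => ?_⟩
          calc F.res h₁ x = F.res h₂ (F.res h x) := (res_res _ _ _).symm
            _ ≤ F.res h₂ y := F.res_mono h₂ _ _ hxy
        have h2 := (hq y a).1 a (le_refl a) x hmem
        rwa [res_refl] at h2
      · intro hxy
        have hres_le : F.res (le_top : b ≤ ⊤) (q y) ≤ y := by
          refine (hq y b).2 ?_
          intro c hc z hz
          obtain ⟨hca, f⟩ := hz
          have h2 := f c (le_refl c) hc
          rwa [res_refl] at h2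
        calc F.res h x ≤ F.res h (F.res le_top (q y)) := F.res_mono h _ _ hxy
          _ = F.res (le_top : b ≤ ⊤) (q y) := by rw [res_res]
          _ ≤ y := hres_le

end Posheaf

/-- For a posheaf `F` on a frame with top `⊤`, the following
are equivalent: (1) every downsheaf has a supremum extendable to a global
point; (2) every subsheaf has a supremum extendable to a global point;
(3) every `F(u)` is a complete lattice and every restriction map is surjective
with both a left and a right adjoint. -/
theorem posheaf_complete_tfae (F : Posheaf.{u, v, w} X) :
    ((∀ S : F.Subsheaf, S.IsDownsheaf →
        ∃ p : F.obj (⊤ : X), ∀ a : X,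
          IsLeast {t : F.obj a | ∀ (b : X) (h : b ≤ a), ∀ x ∈ S.carrier b, x ≤ F.res h t}
            (F.res le_top p)) ↔
      (∀ S : F.Subsheaf,
        ∃ p : F.obj (⊤ : X), ∀ a : X,
          IsLeast {t : F.obj a | ∀ (b : X) (h : b ≤ a), ∀ x ∈ S.carrier b, x ≤ F.res h t}
            (F.res le_top p))) ∧
    ((∀ S : F.Subsheaf,
        ∃ p : F.obj (⊤ : X), ∀ a : X,
          IsLeast {t : F.obj a | ∀ (b : X) (h : b ≤ a), ∀ x ∈ S.carrier b, x ≤ F.res h t}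
            (F.res le_top p)) ↔
      ((∀ (a : X) (A : Set (F.obj a)), ∃ s, IsLUB A s) ∧
       (∀ {a b : X} (h : b ≤ a),
          Function.Surjective (F.res h) ∧
          (∃ l : F.obj b → F.obj a, ∀ (x : F.obj b) (y : F.obj a),
            l x ≤ y ↔ x ≤ F.res h y) ∧
          (∃ r : F.obj b → F.obj a, ∀ (x : F.obj a) (y : F.obj b),
            F.res h x ≤ y ↔ x ≤ r y)))) := by
  constructor
  · constructor
    · intro h1
      obtain ⟨hcl, hres⟩ := Posheaf.cond3_of_cond1 F h1
      exact fun S => F.cond2_of_cond3 hcl hres S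
    · intro h2 S _
      exact h2 S
  · constructor
    · intro h2
      exact Posheaf.cond3_of_cond1 F (fun S _ => h2 S)
    · intro h3
      exact fun S => F.cond2_of_cond3 h3.1 h3.2 S
end

section
/- Let F and G be complete posheaves on a frame O(X) and let α : F → G be a morphism of sheaves with every component α_u order-preserving. Then the following are equivalent: (1) for every u ∈ O(X), α_u preserves arbitrary joins, and for all v ≤ u, α_u ∘ f_{uv} = g_{uv} ∘ α_v, where f_{uv} : F(v) → F(u) and g_{uv} : G(v) → G(u) are the left adjoints of the restriction maps F(u) → F(v) and G(u) → G(v); (2) there exists a morphism of sheaves β : G → F with every component order-preserving such that α_u is left adjoint to β_u for every u ∈ O(X). -/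
universe u v w

variable {X : Type u} [Order.Frame X]

/-- A complete partially ordered sheaf on a frame `X`: a posheaf in which every
`F(u)` is a complete lattice and every restriction map is surjective and has
both a left adjoint `ladj` and a right adjoint. -/
structure CompletePosheaf (X : Type u) [Order.Frame X] where
  obj : X → Type v
  lat : ∀ a, CompleteLattice (obj a)
  res : ∀ {a b : X}, b ≤ a → obj a → obj b
  res_self : ∀ (a : X) (x : obj a), res (le_refl a) x = x
  res_comp : ∀ {a b c : X} (h₁ : c ≤ b) (h₂ : b ≤ a) (x : obj a),
    res h₁ (res h₂ x) = res (h₁.trans h₂) x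
  res_mono : ∀ {a b : X} (h : b ≤ a) (x y : obj a),
    (lat a).le x y → (lat b).le (res h x) (res h y)
  isSheaf : ∀ {ι : Type w} (c : ι → X) (s : ∀ i, obj (c i)),
    (∀ i j, res (inf_le_left : c i ⊓ c j ≤ c i) (s i)
          = res (inf_le_right : c i ⊓ c j ≤ c j) (s j)) →
    ∃! t : obj (⨆ i, c i), ∀ i, res (le_iSup c i) t = s i
  pos3 : ∀ {ι : Type w} (c : ι → X) (s t : ∀ i, obj (c i)),
    (∀ i j, res (inf_le_left : c i ⊓ c j ≤ c i) (s i)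
          = res (inf_le_right : c i ⊓ c j ≤ c j) (s j)) →
    (∀ i j, res (inf_le_left : c i ⊓ c j ≤ c i) (t i)
          = res (inf_le_right : c i ⊓ c j ≤ c j) (t j)) →
    (∀ i, (lat (c i)).le (s i) (t i)) →
    ∀ (a b : obj (⨆ i, c i)),
      (∀ i, res (le_iSup c i) a = s i) → (∀ i, res (le_iSup c i) b = t i) →
      (lat (⨆ i, c i)).le a b
  res_surj : ∀ {a b : X} (h : b ≤ a), Function.Surjective (res h)
  ladj : ∀ {a b : X}, b ≤ a → obj b → obj a
  ladj_adj : ∀ {a b : X} (h : b ≤ a) (x : obj b) (y : obj a),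
    (lat a).le (ladj h x) y ↔ (lat b).le x (res h y)
  radj : ∀ {a b : X} (h : b ≤ a), ∃ r : obj b → obj a,
    ∀ (x : obj a) (y : obj b), (lat b).le (res h x) y ↔ (lat a).le x (r y)

attribute [instance] CompletePosheaf.lat

/-- A morphism of sheaves between complete posheaves. -/
structure CompletePosheaf.Hom (F G : CompletePosheaf.{u, v, w} X) where
  app : ∀ a, F.obj a → G.obj a
  natural : ∀ {a b : X} (h : b ≤ a) (x : F.obj a),
    app b (F.res h x) = G.res h (app a x)

/-- For an order-preserving morphism `α : F → G` of complete
posheaves, the following are equivalent: (1) every `α_u` preserves arbitrary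
joins and `α_u ∘ f_{uv} = g_{uv} ∘ α_v` for all `v ≤ u`, where `f_{uv}`,
`g_{uv}` are the left adjoints of the restrictions; (2) `α` has a right
adjoint `β` componentwise. -/
theorem completePosheaf_supPreserving_iff_hasRightAdjoint
    (F G : CompletePosheaf.{u, v, w} X) (α : F.Hom G)
    (hα : ∀ a : X, Monotone (α.app a)) :
    ((∀ (a : X) (A : Set (F.obj a)), α.app a (sSup A) = sSup (α.app a '' A)) ∧
     (∀ {a b : X} (h : b ≤ a) (y : F.obj b),
        α.app a (F.ladj h y) = G.ladj h (α.app b y))) ↔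
    (∃ β : G.Hom F, (∀ a : X, Monotone (β.app a)) ∧
      ∀ (a : X) (x : F.obj a) (y : G.obj a), α.app a x ≤ y ↔ x ≤ β.app a y) := by
  constructor
  · rintro ⟨hsup, hladj⟩
    have adj : ∀ (a : X) (x : F.obj a) (y : G.obj a),
        α.app a x ≤ y ↔ x ≤ sSup {x' | α.app a x' ≤ y} := by
      intro a x y
      constructor
      · intro h; exact le_sSup h
      · intro h
        calc α.app a x ≤ α.app a (sSup {x' | α.app a x' ≤ y}) := hα a h
          _ = sSup (α.app a '' {x' | α.app a x' ≤ y}) := hsup a _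
          _ ≤ y := sSup_le (by rintro z ⟨w, hw, rfl⟩; exact hw)
    refine ⟨⟨fun a y => sSup {x | α.app a x ≤ y}, ?_⟩, ?_, fun a x y => adj a x y⟩
    · intro a b h y
      have key : ∀ x : F.obj b,
          x ≤ F.res h (sSup {x' | α.app a x' ≤ y}) ↔
          x ≤ sSup {x' | α.app b x' ≤ G.res h y} := by
        intro x
        rw [← F.ladj_adj h, ← adj a, hladj h x, G.ladj_adj, adj b]
      exact le_antisymm ((key _).mpr le_rfl) ((key _).mp le_rfl)
    · intro a y₁ y₂ hy
      exact sSup_le_sSup (fun x hx => le_trans hx hy)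
  · rintro ⟨β, hβ, adj⟩
    constructor
    · intro a A
      apply le_antisymm
      · rw [adj]
        apply sSup_le
        intro x hx
        rw [← adj]
        exact le_sSup ⟨x, hx, rfl⟩
      · apply sSup_le
        rintro z ⟨x, hx, rfl⟩
        exact hα a (le_sSup hx)
    · intro a b h y
      have key : ∀ z, α.app a (F.ladj h y) ≤ z ↔ G.ladj h (α.app b y) ≤ z := by
        intro z
        rw [adj, F.ladj_adj, ← β.natural, ← adj, ← G.ladj_adj]
      exact le_antisymm ((key _).mpr le_rfl) ((key _).mp le_rfl)
end

section
/- Let F be a posheaf on a frame O(X) with top element ⊤. Then the following are equivalent: (1) there exist a global element e ∈ F(⊤) such that e|_w ≤ x for every w ∈ O(X) and every x ∈ F(w), and a morphism of sheaves m : F × F → F (where (F × F)(u) = F(u) × F(u) with componentwise restrictions) such that for every u ∈ O(X) and all x, y, z ∈ F(u): m_u(x, y) ≤ z iff x ≤ z and y ≤ z; (2) every F(u) is a join-semilattice with a least element, and every restriction map F(u) → F(v) preserves binary joins and least elements. -/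
universe u v w

variable {X : Type u} [Order.Frame X]

/-- For a posheaf `F` on a frame with top `⊤`, the following
are equivalent: (1) there exist a least global point `e ∈ F(⊤)` and a morphism
of sheaves `m : F × F → F` computing binary joins; (2) every `F(u)` is a
join-semilattice with a least element and every restriction map preserves
binary joins and least elements. -/
theorem posheaf_finite_sup_complete_iff (F : Posheaf.{u, v, w} X) :
    ((∃ e : F.obj (⊤ : X), ∀ (a : X) (x : F.obj a), F.res le_top e ≤ x) ∧
     (∃ m : ∀ a : X, F.obj a → F.obj a → F.obj a,
        (∀ {a b : X} (h : b ≤ a) (x y : F.obj a),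
          F.res h (m a x y) = m b (F.res h x) (F.res h y)) ∧
        (∀ (a : X) (x y z : F.obj a), m a x y ≤ z ↔ x ≤ z ∧ y ≤ z))) ↔
    ((∀ (a : X) (x y : F.obj a), ∃ j, IsLUB {x, y} j) ∧
     (∀ a : X, ∃ e : F.obj a, ∀ x, e ≤ x) ∧
     (∀ {a b : X} (h : b ≤ a) (x y j : F.obj a),
        IsLUB {x, y} j → IsLUB {F.res h x, F.res h y} (F.res h j)) ∧
     (∀ {a b : X} (h : b ≤ a) (e : F.obj a),
        (∀ x, e ≤ x) → ∀ y : F.obj b, F.res h e ≤ y)) := by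
  constructor
  · rintro ⟨⟨e, he⟩, ⟨m, hnat, hm⟩⟩
    have hlub : ∀ (a : X) (x y : F.obj a), IsLUB {x, y} (m a x y) := by
      intro a x y
      constructor
      · intro z hz
        have h0 := (hm a x y (m a x y)).1 le_rfl
        simp only [Set.mem_insert_iff, Set.mem_singleton_iff] at hz
        rcases hz with h | h <;> rw [h]
        · exact h0.1
        · exact h0.2
      · intro z hz
        exact (hm a x y z).2 ⟨hz (Set.mem_insert _ _), hz (Set.mem_insert_of_mem _ rfl)⟩
    refine ⟨fun a x y => ⟨m a x y, hlub a x y⟩, fun a => ⟨F.res le_top e, he a⟩, ?_, ?_⟩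
    · intro a b h x y j hj
      have hje : j = m a x y := hj.unique (hlub a x y)
      subst hje
      rw [hnat h x y]
      exact hlub b _ _
    · intro a b h e' he' y
      have heq : e' = F.res le_top e := le_antisymm (he' _) (he a e')
      subst heq
      rw [F.res_comp]
      exact he b y
  · rintro ⟨J, B, RJ, RB⟩
    obtain ⟨e, heT⟩ := B ⊤
    choose m hm using J
    refine ⟨⟨e, fun a x => RB le_top e heT x⟩, m, ?_, ?_⟩
    · intro a b h x y
      exact (RJ h x y _ (hm a x y)).unique (hm b _ _)
    · intro a x y z
      constructor
      · intro hz
        exact ⟨le_trans ((hm a x y).1 (Set.mem_insert _ _)) hz,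
               le_trans ((hm a x y).1 (Set.mem_insert_of_mem _ rfl)) hz⟩
      · rintro ⟨h1, h2⟩
        exact (hm a x y).2 (by rintro z' (rfl | rfl) <;> assumption)
end

section
/- Let F be a complete posheaf on a frame O(X). Then the following are equivalent: (1) for every u ∈ O(X), every x ∈ F(u), and every subsheaf S of F below u (a family S(v) ⊆ F(v) for v ≤ u, closed under restriction and under patching of compatible families), the least element t ∈ F(u) satisfying x|_v ∧ y ≤ t|_v for all v ≤ u and y ∈ S(v) equals x ∧ s, where s is the least element of F(u) satisfying y ≤ s|_v for all v ≤ u and y ∈ S(v); (2) every F(u) is a frame, and for all v ≤ u, x ∈ F(u), y ∈ F(v): x ∧ l_{vu}(y) = l_{vu}(x|_v ∧ y), where l_{vu} : F(v) → F(u) is the left adjoint of the restriction map F(u) → F(v). -/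
universe u v w

variable {X : Type u} [Order.Frame X]

/-- A subsheaf of a complete posheaf: a family of subsets closed under
restriction and under patching of compatible families. -/
structure CompletePosheaf.Subsheaf (F : CompletePosheaf.{u, v, w} X) where
  carrier : ∀ a : X, Set (F.obj a)
  res_mem : ∀ {a b : X} (h : b ≤ a) {x : F.obj a}, x ∈ carrier a → F.res h x ∈ carrier b
  patch_mem : ∀ {ι : Type w} (c : ι → X) (s : ∀ i, F.obj (c i)),
    (∀ i, s i ∈ carrier (c i)) →
    (∀ i j, F.res (inf_le_left : c i ⊓ c j ≤ c i) (s i)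
          = F.res (inf_le_right : c i ⊓ c j ≤ c j) (s j)) →
    ∀ t : F.obj (⨆ i, c i), (∀ i, F.res (le_iSup c i) t = s i) → t ∈ carrier (⨆ i, c i)

namespace CompletePosheaf

variable (F : CompletePosheaf.{u, v, w} X)

lemma res_mono' {a b : X} (h : b ≤ a) {x y : F.obj a} (hxy : x ≤ y) :
    F.res h x ≤ F.res h y := F.res_mono h x y hxy

lemma res_inf {a b : X} (h : b ≤ a) (p q : F.obj a) :
    F.res h (p ⊓ q) = F.res h p ⊓ F.res h q := by
  apply le_antisymm
  · exact le_inf (F.res_mono' h inf_le_left) (F.res_mono' h inf_le_right)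
  · refine (F.ladj_adj h _ _).1 ?_
    exact le_inf ((F.ladj_adj h _ p).2 inf_le_left) ((F.ladj_adj h _ q).2 inf_le_right)

lemma ladj_refl (a : X) (y : F.obj a) : F.ladj (le_refl a) y = y := by
  apply le_antisymm
  · exact (F.ladj_adj (le_refl a) y y).2 (by rw [F.res_self])
  · have := (F.ladj_adj (le_refl a) y (F.ladj (le_refl a) y)).1 le_rfl
    rwa [F.res_self] at this

lemma pos_glue {ι : Type w} (c : ι → X) {b : X} (e : (⨆ i, c i) = b)
    (hc : ∀ i, c i ≤ b) (p q : F.obj b)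
    (h : ∀ i, F.res (hc i) p ≤ F.res (hc i) q) : p ≤ q := by
  subst e
  exact F.pos3 c (fun i => F.res (hc i) p) (fun i => F.res (hc i) q)
    (fun i j => by rw [F.res_comp, F.res_comp])
    (fun i j => by rw [F.res_comp, F.res_comp])
    h p q (fun i => rfl) (fun i => rfl)

/-- The subsheaf generated by a family of elements `g k ∈ F.obj (d k)`. -/
def gen {κ : Type*} (d : κ → X) (g : ∀ k, F.obj (d k)) : F.Subsheaf where
  carrier b := {t | ∃ (ι : Type w) (c : ι → X) (k : ι → κ)
    (hcb : ∀ i, c i ≤ b) (hcd : ∀ i, c i ≤ d (k i)),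
    (⨆ i, c i) = b ∧ ∀ i, F.res (hcb i) t = F.res (hcd i) (g (k i))}
  res_mem := by
    rintro b b' h t ⟨ι, c, k, hcb, hcd, e, ht⟩
    refine ⟨ι, fun i => c i ⊓ b', k, fun i => inf_le_right,
      fun i => inf_le_left.trans (hcd i), ?_, ?_⟩
    · rw [← iSup_inf_eq, e, inf_eq_right.mpr h]
    · intro i
      have h1 : F.res (inf_le_right : c i ⊓ b' ≤ b') (F.res h t)
          = F.res ((inf_le_left : c i ⊓ b' ≤ c i).trans (hcb i)) t := by
        rw [F.res_comp]
      rw [h1, ← F.res_comp (inf_le_left : c i ⊓ b' ≤ c i) (hcb i) t, ht i, F.res_comp]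
  patch_mem := by
    intro ι c s hs hcompat t ht
    choose ι' c' k' hcb' hcd' e' ht' using hs
    refine ⟨(Σ i, ι' i), fun p => c' p.1 p.2, fun p => k' p.1 p.2,
      fun p => (hcb' p.1 p.2).trans (le_iSup c p.1), fun p => hcd' p.1 p.2, ?_, ?_⟩
    · rw [iSup_sigma]
      refine le_antisymm (iSup_le fun i => ?_) (iSup_le fun i => ?_)
      · rw [e' i]; exact le_iSup c i
      · rw [← e' i]; exact le_iSup (fun i => ⨆ j, c' i j) i
    · rintro ⟨i, j⟩
      have h1 : F.res ((hcb' i j).trans (le_iSup c i)) t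
          = F.res (hcb' i j) (F.res (le_iSup c i) t) := by rw [F.res_comp]
      rw [h1, ht i, ht' i j]

lemma gen_mem_self {κ : Type*} (d : κ → X) (g : ∀ k, F.obj (d k)) (k : κ) :
    g k ∈ (F.gen d g).carrier (d k) :=
  ⟨PUnit.{w + 1}, fun _ => d k, fun _ => k, fun _ => le_rfl, fun _ => le_rfl,
    iSup_const, fun _ => rfl⟩

lemma gen_isLeast {a : X} {κ : Type*} (d : κ → X) (hd : ∀ k, d k ≤ a)
    (g : ∀ k, F.obj (d k)) :
    IsLeast {t : F.obj a | ∀ (b : X) (h : b ≤ a), ∀ y ∈ (F.gen d g).carrier b,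
        y ≤ F.res h t} (⨆ k, F.ladj (hd k) (g k)) := by
  constructor
  · rintro b h y ⟨ι, c, k, hcb, hcd, e, ht⟩
    refine F.pos_glue c e hcb _ _ fun i => ?_
    rw [ht i, F.res_comp]
    have h1 : g (k i) ≤ F.res (hd (k i)) (⨆ k, F.ladj (hd k) (g k)) :=
      (F.ladj_adj (hd (k i)) _ _).1 (le_iSup (fun k => F.ladj (hd k) (g k)) (k i))
    have h2 := F.res_mono' (hcd i) h1
    rwa [F.res_comp] at h2
  · intro t ht
    exact iSup_le fun k => (F.ladj_adj (hd k) _ _).2 (ht (d k) (hd k) (g k)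
      (F.gen_mem_self d g k))

end CompletePosheaf

/-- For a complete posheaf `F`, the following are equivalent:
(1) for every `u`, `x ∈ F(u)` and every subsheaf `S` below `u`, the supremum of
the family `{x|_v ∧ y : y ∈ S(v)}` equals `x ∧ (sup of S)`; (2) every `F(u)` is
a frame and the Frobenius law `x ∧ l_{vu}(y) = l_{vu}(x|_v ∧ y)` holds. -/
theorem completePosheaf_heyting_iff_frames_and_frobenius
    (F : CompletePosheaf.{u, v, w} X) :
    (∀ (a : X) (x : F.obj a) (S : F.Subsheaf),
        (∀ b : X, (S.carrier b).Nonempty → b ≤ a) →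
        ∀ s : F.obj a,
          IsLeast {t : F.obj a | ∀ (b : X) (h : b ≤ a), ∀ y ∈ S.carrier b, y ≤ F.res h t} s →
          IsLeast {t : F.obj a | ∀ (b : X) (h : b ≤ a), ∀ y ∈ S.carrier b,
              F.res h x ⊓ y ≤ F.res h t}
            (x ⊓ s)) ↔
    ((∀ (a : X) (x : F.obj a) (A : Set (F.obj a)), x ⊓ sSup A = ⨆ y ∈ A, x ⊓ y) ∧
     (∀ {a b : X} (h : b ≤ a) (x : F.obj a) (y : F.obj b),
        x ⊓ F.ladj h y = F.ladj h (F.res h x ⊓ y))) := by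
  constructor
  · intro H
    constructor
    · -- frame law
      intro a x A
      set S := F.gen (fun _ : ↥A => a) (fun k => (k : F.obj a)) with hS
      have hbelow : ∀ b : X, (S.carrier b).Nonempty → b ≤ a := by
        rintro b ⟨t, ι, c, k, hcb, hcd, e, ht⟩
        rw [← e]
        exact iSup_le fun i => hcd i
      have hsSup : (⨆ k : ↥A, F.ladj (le_refl a) (k : F.obj a)) = sSup A := by
        simp only [F.ladj_refl]
        exact (sSup_eq_iSup' A).symm
      have hL := F.gen_isLeast (fun _ : ↥A => a) (fun _ => le_refl a)
        (fun k => (k : F.obj a))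
      have hT := H a x S hbelow _ hL
      rw [hsSup] at hT
      refine le_antisymm (hT.2 ?_) ?_
      · -- ⨆ y ∈ A, x ⊓ y belongs to the target set
        rintro b h y ⟨ι, c, k, hcb, hcd, e, ht⟩
        refine F.pos_glue c e hcb _ _ fun i => ?_
        rw [F.res_inf, F.res_comp, ht i, F.res_comp]
        have h1 : F.res (hcd i) x ⊓ F.res (hcd i) (k i : F.obj a)
            = F.res (hcd i) (x ⊓ (k i : F.obj a)) := (F.res_inf _ _ _).symm
        have h2 : x ⊓ (k i : F.obj a) ≤ ⨆ y ∈ A, x ⊓ y :=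
          le_iSup₂ (f := fun y (_ : y ∈ A) => x ⊓ y) (k i : F.obj a) (k i).2
        calc F.res ((hcb i).trans h) x ⊓ F.res (hcd i) (k i : F.obj a)
            = F.res (hcd i) (x ⊓ (k i : F.obj a)) := h1
          _ ≤ F.res (hcd i) (⨆ y ∈ A, x ⊓ y) := F.res_mono' _ h2
      · exact iSup₂_le fun y hy => le_inf inf_le_left
          (inf_le_right.trans (le_sSup hy))
    · -- Frobenius
      intro a b h x y
      set S := F.gen (fun _ : PUnit.{w + 1} => b) (fun _ => y) with hS
      have hbelow : ∀ b' : X, (S.carrier b').Nonempty → b' ≤ a := by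
        rintro b' ⟨t, ι, c, k, hcb, hcd, e, ht⟩
        rw [← e]
        exact iSup_le fun i => (hcd i).trans h
      have hL := F.gen_isLeast (fun _ : PUnit.{w + 1} => b) (fun _ => h) (fun _ => y)
      have hsup : (⨆ _ : PUnit.{w + 1}, F.ladj h y) = F.ladj h y := iSup_const
      rw [hsup] at hL
      have hT := H a x S hbelow _ hL
      refine le_antisymm (hT.2 ?_) ?_
      · -- ladj h (res h x ⊓ y) belongs to the target set
        rintro b' h' y' ⟨ι, c, k, hcb, hcd, e, ht⟩
        refine F.pos_glue c e hcb _ _ fun i => ?_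
        rw [F.res_inf, F.res_comp, ht i, F.res_comp]
        have hu : F.res h x ⊓ y ≤ F.res h (F.ladj h (F.res h x ⊓ y)) :=
          (F.ladj_adj h _ _).1 le_rfl
        have h1 : F.res ((hcb i).trans h') x ⊓ F.res (hcd i) y
            = F.res (hcd i) (F.res h x ⊓ y) := by
          rw [F.res_inf, F.res_comp]
        rw [h1]
        have h2 := F.res_mono' (hcd i) hu
        rwa [F.res_comp] at h2
      · refine le_inf ((F.ladj_adj h _ _).2 inf_le_left)
          ((F.ladj_adj h _ _).2 (inf_le_right.trans ?_))
        exact (F.ladj_adj h y _).1 le_rfl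
  · rintro ⟨hframe, hfrob⟩ a x S hbelow s hs
    set A : Set (F.obj a) :=
      {z | ∃ (b : X) (h : b ≤ a) (y : F.obj b), y ∈ S.carrier b ∧ z = F.ladj h y}
      with hA
    have hsA : s = sSup A := by
      apply le_antisymm
      · refine hs.2 fun b h y hy => ?_
        exact (F.ladj_adj h y _).1 (le_sSup ⟨b, h, y, hy, rfl⟩)
      · refine sSup_le ?_
        rintro z ⟨b, h, y, hy, rfl⟩
        exact (F.ladj_adj h y s).2 (hs.1 b h y hy)
    constructor
    · intro b h y hy
      refine (F.ladj_adj h _ _).1 ?_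
      rw [← hfrob]
      exact inf_le_inf_left x ((F.ladj_adj h y s).2 (hs.1 b h y hy))
    · intro t ht
      rw [hsA, hframe]
      refine iSup₂_le ?_
      rintro z ⟨b, h, y, hy, rfl⟩
      rw [hfrob]
      exact (F.ladj_adj h _ t).2 (ht b h y hy)
end

section
/- Let F be a frame sheaf on a frame O(X) with top element ⊤. Then the map f : O(X) → F(⊤) defined by f(u) = l_{u⊤}(⊤_{F(u)}), where ⊤_{F(u)} is the top element of F(u) and l_{u⊤} : F(u) → F(⊤) is the left adjoint of the restriction map F(⊤) → F(u), is a frame homomorphism: f(u ∧ v) = f(u) ∧ f(v) for all u, v, f(⊤) = ⊤_{F(⊤)}, and f(⋁_{i} u_i) = ⋁_{i} f(u_i) for every family (u_i). -/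
universe u v w

variable {X : Type u} [Order.Frame X]

section Aux

variable (F : CompletePosheaf.{u, v, w} X)

lemma CP.unit {a b : X} (h : b ≤ a) (x : F.obj b) : x ≤ F.res h (F.ladj h x) :=
  (F.ladj_adj h x (F.ladj h x)).mp le_rfl

lemma CP.ladj_mono {a b : X} (h : b ≤ a) {x y : F.obj b} (hxy : x ≤ y) :
    F.ladj h x ≤ F.ladj h y :=
  (F.ladj_adj h x (F.ladj h y)).mpr (hxy.trans (CP.unit F h y))

lemma CP.res_top {a b : X} (h : b ≤ a) : F.res h (⊤ : F.obj a) = ⊤ :=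
  le_antisymm le_top ((F.ladj_adj h ⊤ ⊤).mp le_top)

lemma CP.res_ladj {a b : X} (h : b ≤ a) (x : F.obj b) :
    F.res h (F.ladj h x) = x := by
  obtain ⟨x₀, hx₀⟩ := F.res_surj h x
  refine le_antisymm ?_ (CP.unit F h x)
  have h1 : F.ladj h x ≤ x₀ := (F.ladj_adj h x x₀).mpr (le_of_eq hx₀.symm)
  have := F.res_mono h _ _ h1
  exact le_trans this (le_of_eq hx₀)

lemma CP.ladj_comp {a b c : X} (h₁ : c ≤ b) (h₂ : b ≤ a) (x : F.obj c) :
    F.ladj h₂ (F.ladj h₁ x) = F.ladj (h₁.trans h₂) x := by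
  refine le_antisymm ?_ ?_
  · refine (F.ladj_adj h₂ _ _).mpr ((F.ladj_adj h₁ _ _).mpr ?_)
    rw [F.res_comp h₁ h₂]
    exact CP.unit F (h₁.trans h₂) x
  · refine (F.ladj_adj (h₁.trans h₂) _ _).mpr ?_
    rw [← F.res_comp h₁ h₂]
    exact le_trans (CP.unit F h₁ x) (F.res_mono h₁ _ _ (CP.unit F h₂ _))

/-- the canonical map is monotone -/
lemma CP.f_mono {a b : X} (h : b ≤ a) :
    F.ladj (le_top : b ≤ (⊤ : X)) (⊤ : F.obj b)
      ≤ F.ladj (le_top : a ≤ (⊤ : X)) (⊤ : F.obj a) := by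
  have := CP.ladj_comp F h (le_top : a ≤ (⊤ : X)) (⊤ : F.obj b)
  calc F.ladj (le_top : b ≤ (⊤ : X)) (⊤ : F.obj b)
      = F.ladj (le_top : a ≤ (⊤ : X)) (F.ladj h (⊤ : F.obj b)) := this.symm
    _ ≤ F.ladj (le_top : a ≤ (⊤ : X)) (⊤ : F.obj a) :=
        CP.ladj_mono F _ le_top

/-- Beck–Chevalley-type key inequality, via sheaf gluing on the cover `{a, b}`. -/
lemma CP.key (a b : X) :
    F.res (le_top : b ≤ (⊤ : X)) (F.ladj (le_top : a ≤ (⊤ : X)) (⊤ : F.obj a))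
      ≤ F.ladj (inf_le_right : a ⊓ b ≤ b) (⊤ : F.obj (a ⊓ b)) := by
  set e' : F.obj b := F.ladj (inf_le_right : a ⊓ b ≤ b) (⊤ : F.obj (a ⊓ b)) with he'
  set c' : ULift.{w} Bool → X := fun i => Bool.casesOn i.down b a with hc'
  have ha : a ≤ ⨆ i, c' i := le_iSup c' ⟨true⟩
  have hb : b ≤ ⨆ i, c' i := le_iSup c' ⟨false⟩
  -- sections
  set s : ∀ i, F.obj (c' i) := fun i =>
    Bool.casesOn (motive := fun t => F.obj (Bool.casesOn t b a)) i.down e' ⊤ with hs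
  have hres_e' : F.res (inf_le_right : a ⊓ b ≤ b) e' = ⊤ := by
    refine le_antisymm le_top ?_
    exact le_trans (CP.unit F (inf_le_right : a ⊓ b ≤ b) ⊤) le_rfl
  have compat : ∀ i j, F.res (inf_le_left : c' i ⊓ c' j ≤ c' i) (s i)
      = F.res (inf_le_right : c' i ⊓ c' j ≤ c' j) (s j) := by
    rintro ⟨i⟩ ⟨j⟩
    cases i <;> cases j
    · rfl
    · -- i = false (b, e'), j = true (a, ⊤)
      show F.res (inf_le_left : b ⊓ a ≤ b) e' = F.res (inf_le_right : b ⊓ a ≤ a) (⊤ : F.obj a)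
      rw [CP.res_top]
      have h₁ : b ⊓ a ≤ a ⊓ b := le_inf inf_le_right inf_le_left
      have : F.res (inf_le_left : b ⊓ a ≤ b) e'
          = F.res h₁ (F.res (inf_le_right : a ⊓ b ≤ b) e') :=
        (F.res_comp h₁ (inf_le_right : a ⊓ b ≤ b) e').symm
      rw [this, hres_e', CP.res_top]
    · -- i = true (a, ⊤), j = false (b, e')
      show F.res (inf_le_left : a ⊓ b ≤ a) (⊤ : F.obj a) = F.res (inf_le_right : a ⊓ b ≤ b) e'
      rw [CP.res_top, hres_e']
    · rfl
  obtain ⟨g, hg, -⟩ := F.isSheaf c' s compat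
  have hga : F.res (le_iSup c' ⟨true⟩) g = (⊤ : F.obj a) := hg ⟨true⟩
  have hgb : F.res (le_iSup c' ⟨false⟩) g = e' := hg ⟨false⟩
  set z : F.obj (⊤ : X) := F.ladj (le_top : (⨆ i, c' i) ≤ (⊤ : X)) g with hz
  have hrz : F.res (le_top : (⨆ i, c' i) ≤ (⊤ : X)) z = g := CP.res_ladj F _ g
  have h2 : F.ladj (le_top : a ≤ (⊤ : X)) (⊤ : F.obj a) ≤ z := by
    refine (F.ladj_adj (le_top : a ≤ (⊤ : X)) ⊤ z).mpr ?_
    have : F.res (le_top : a ≤ (⊤ : X)) z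
        = F.res (le_iSup c' ⟨true⟩) (F.res (le_top : (⨆ i, c' i) ≤ (⊤ : X)) z) :=
      (F.res_comp (le_iSup c' ⟨true⟩) (le_top : (⨆ i, c' i) ≤ (⊤ : X)) z).symm
    rw [this, hrz, hga]
  have h3 : F.res (le_top : b ≤ (⊤ : X)) z = e' := by
    have : F.res (le_top : b ≤ (⊤ : X)) z
        = F.res (le_iSup c' ⟨false⟩) (F.res (le_top : (⨆ i, c' i) ≤ (⊤ : X)) z) :=
      (F.res_comp (le_iSup c' ⟨false⟩) (le_top : (⨆ i, c' i) ≤ (⊤ : X)) z).symm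
    rw [this, hrz, hgb]
  calc F.res (le_top : b ≤ (⊤ : X)) (F.ladj (le_top : a ≤ (⊤ : X)) (⊤ : F.obj a))
      ≤ F.res (le_top : b ≤ (⊤ : X)) z := F.res_mono _ _ _ h2
    _ = e' := h3

end Aux
/-- If `F` is a frame sheaf on `O(X)` (a complete posheaf in
which every `F(u)` is a frame and the Frobenius condition holds), then
`f : O(X) → F(⊤)`, `f(u) = l_{u⊤}(⊤_{F(u)})`, is a frame homomorphism. -/
theorem frameSheaf_canonical_frameHom (F : CompletePosheaf.{u, v, w} X)
    -- every `F(u)` is a frame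
    (hframe : ∀ (a : X) (x : F.obj a) (A : Set (F.obj a)), x ⊓ sSup A = ⨆ y ∈ A, x ⊓ y)
    -- the Frobenius condition
    (hfrob : ∀ {a b : X} (h : b ≤ a) (x : F.obj a) (y : F.obj b),
      x ⊓ F.ladj h y = F.ladj h (F.res h x ⊓ y)) :
    (∀ a b : X,
        F.ladj (le_top : a ⊓ b ≤ (⊤ : X)) (⊤ : F.obj (a ⊓ b))
          = F.ladj (le_top : a ≤ (⊤ : X)) (⊤ : F.obj a)
              ⊓ F.ladj (le_top : b ≤ (⊤ : X)) (⊤ : F.obj b)) ∧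
    (F.ladj (le_top : (⊤ : X) ≤ (⊤ : X)) (⊤ : F.obj (⊤ : X)) = (⊤ : F.obj (⊤ : X))) ∧
    (∀ {ι : Type w} (c : ι → X),
        F.ladj (le_top : (⨆ i, c i) ≤ (⊤ : X)) (⊤ : F.obj (⨆ i, c i))
          = ⨆ i, F.ladj (le_top : c i ≤ (⊤ : X)) (⊤ : F.obj (c i))) := by
  refine ⟨?_, ?_, ?_⟩
  · -- binary meets
    intro a b
    refine le_antisymm (le_inf (CP.f_mono F inf_le_left) (CP.f_mono F inf_le_right)) ?_
    have hfr := hfrob (le_top : b ≤ (⊤ : X))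
      (F.ladj (le_top : a ≤ (⊤ : X)) (⊤ : F.obj a)) (⊤ : F.obj b)
    rw [inf_top_eq] at hfr
    rw [hfr]
    have hkey := CP.key F a b
    calc F.ladj (le_top : b ≤ (⊤ : X))
          (F.res (le_top : b ≤ (⊤ : X)) (F.ladj (le_top : a ≤ (⊤ : X)) (⊤ : F.obj a)))
        ≤ F.ladj (le_top : b ≤ (⊤ : X))
            (F.ladj (inf_le_right : a ⊓ b ≤ b) (⊤ : F.obj (a ⊓ b))) :=
          CP.ladj_mono F _ hkey
      _ = F.ladj (le_top : a ⊓ b ≤ (⊤ : X)) (⊤ : F.obj (a ⊓ b)) :=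
          CP.ladj_comp F (inf_le_right : a ⊓ b ≤ b) (le_top : b ≤ (⊤ : X)) ⊤
  · -- top
    refine le_antisymm le_top ?_
    have h := CP.unit F (le_top : (⊤ : X) ≤ (⊤ : X)) (⊤ : F.obj (⊤ : X))
    have h2 : F.res (le_top : (⊤ : X) ≤ (⊤ : X))
        (F.ladj (le_top : (⊤ : X) ≤ (⊤ : X)) (⊤ : F.obj (⊤ : X)))
        = F.ladj (le_top : (⊤ : X) ≤ (⊤ : X)) (⊤ : F.obj (⊤ : X)) :=
      F.res_self (⊤ : X) _
    rw [h2] at h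
    exact h
  · -- arbitrary joins
    intro ι c
    set S : F.obj (⊤ : X) := ⨆ i, F.ladj (le_top : c i ≤ (⊤ : X)) (⊤ : F.obj (c i)) with hS
    refine le_antisymm ?_ (iSup_le fun i => CP.f_mono F (le_iSup c i))
    refine (F.ladj_adj (le_top : (⨆ i, c i) ≤ (⊤ : X)) ⊤ S).mpr ?_
    -- use POS3 with sections all ⊤
    have hresS : ∀ i, F.res (le_iSup c i)
        (F.res (le_top : (⨆ i, c i) ≤ (⊤ : X)) S) = (⊤ : F.obj (c i)) := by
      intro i
      have hcomp : F.res (le_iSup c i) (F.res (le_top : (⨆ i, c i) ≤ (⊤ : X)) S)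
          = F.res ((le_iSup c i).trans (le_top : (⨆ i, c i) ≤ (⊤ : X))) S :=
        F.res_comp (le_iSup c i) (le_top : (⨆ i, c i) ≤ (⊤ : X)) S
      rw [hcomp]
      refine le_antisymm le_top ?_
      have h1 : F.ladj (le_top : c i ≤ (⊤ : X)) (⊤ : F.obj (c i)) ≤ S :=
        le_iSup (fun i => F.ladj (le_top : c i ≤ (⊤ : X)) (⊤ : F.obj (c i))) i
      have h2 := F.res_mono ((le_iSup c i).trans (le_top : (⨆ i, c i) ≤ (⊤ : X))) _ _ h1
      exact le_trans (CP.unit F (le_top : c i ≤ (⊤ : X)) (⊤ : F.obj (c i))) h2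
    refine F.pos3 c (fun i => (⊤ : F.obj (c i))) (fun i => (⊤ : F.obj (c i)))
      ?_ ?_ (fun i => le_rfl) (⊤ : F.obj (⨆ i, c i))
      (F.res (le_top : (⨆ i, c i) ≤ (⊤ : X)) S) ?_ ?_
    · intro i j; rw [CP.res_top, CP.res_top]
    · intro i j; rw [CP.res_top, CP.res_top]
    · intro i; exact CP.res_top F _
    · exact hresS
end

section
/- Let F be a frame sheaf on a frame O(X) and let v ≤ u in O(X). Then the left adjoint l_{vu} : F(v) → F(u) of the restriction map F(u) → F(v) is injective, preserves arbitrary joins and binary meets, and maps F(v) bijectively onto the principal ideal {x ∈ F(u) : x ≤ l_{vu}(⊤_{F(v)})} of F(u) (⊤_{F(v)} the top of F(v)), with inverse given by the restriction map x ↦ x|_v; in particular l_{vu} is a frame isomorphism onto this principal ideal. -/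
universe u v w

variable {X : Type u} [Order.Frame X]

/-- If `F` is a frame sheaf and `v ≤ u`, then the left
adjoint `l_{vu} : F(v) → F(u)` of the restriction map is injective, preserves
arbitrary joins and binary meets, and is a frame isomorphism onto the principal
ideal `↓ l_{vu}(⊤)` of `F(u)`, with inverse the restriction map. -/
theorem frameSheaf_ladj_iso_onto_principal_ideal (F : CompletePosheaf.{u, v, w} X)
    -- every `F(u)` is a frame
    (hframe : ∀ (a : X) (x : F.obj a) (A : Set (F.obj a)), x ⊓ sSup A = ⨆ y ∈ A, x ⊓ y)
    -- the Frobenius condition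
    (hfrob : ∀ {a b : X} (h : b ≤ a) (x : F.obj a) (y : F.obj b),
      x ⊓ F.ladj h y = F.ladj h (F.res h x ⊓ y))
    {a b : X} (h : b ≤ a) :
    -- injective
    Function.Injective (F.ladj h) ∧
    -- preserves arbitrary joins
    (∀ A : Set (F.obj b), F.ladj h (sSup A) = sSup (F.ladj h '' A)) ∧
    -- preserves binary meets
    (∀ x y : F.obj b, F.ladj h (x ⊓ y) = F.ladj h x ⊓ F.ladj h y) ∧
    -- lands in the principal ideal `↓ l_{vu}(⊤)`
    (∀ y : F.obj b, F.ladj h y ≤ F.ladj h (⊤ : F.obj b)) ∧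
    -- the restriction map is a left inverse ...
    (∀ y : F.obj b, F.res h (F.ladj h y) = y) ∧
    -- ... and a right inverse on the principal ideal
    (∀ x : F.obj a, x ≤ F.ladj h (⊤ : F.obj b) → F.ladj h (F.res h x) = x) := by
  -- res ∘ ladj = id
  have hli : ∀ y : F.obj b, F.res h (F.ladj h y) = y := by
    intro y
    obtain ⟨x, hx⟩ := F.res_surj h y
    refine le_antisymm ?_ ?_
    · have : F.ladj h y ≤ x := (F.ladj_adj h y x).2 (le_of_eq hx.symm)
      have := F.res_mono h _ _ this
      rwa [hx] at this
    · exact (F.ladj_adj h y (F.ladj h y)).1 le_rfl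
  refine ⟨fun y z hyz => by rw [← hli y, ← hli z, hyz],
    ?_, ?_, ?_, hli, ?_⟩
  · intro A
    refine le_antisymm ?_ ?_
    · refine (F.ladj_adj h _ _).2 (sSup_le fun y hy => ?_)
      have : F.ladj h y ≤ sSup (F.ladj h '' A) := le_sSup ⟨y, hy, rfl⟩
      exact le_trans (le_of_eq (hli y).symm) (F.res_mono h _ _ this)
    · refine sSup_le fun z hz => ?_
      obtain ⟨y, hy, rfl⟩ := hz
      exact (F.ladj_adj h _ _).2 (le_trans (le_sSup hy) (le_of_eq (hli (sSup A)).symm))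
  · intro x y
    have := hfrob h (F.ladj h x) y
    rw [hli x] at this
    exact this.symm
  · intro y
    exact (F.ladj_adj h _ _).2 (by rw [hli]; exact le_top)
  · intro x hx
    refine le_antisymm ((F.ladj_adj h _ _).2 le_rfl) ?_
    have := hfrob h x (⊤ : F.obj b)
    rw [inf_top_eq] at this
    calc x = x ⊓ F.ladj h ⊤ := (inf_eq_left.2 hx).symm
    _ = F.ladj h (F.res h x) := this
    _ ≤ F.ladj h (F.res h x) := le_rfl
end

section
/- Let O(X) be a frame, L a frame, and f : O(X) → L a frame homomorphism (preserving finite meets, top, and arbitrary joins). Define Φ(f)(u) = {x ∈ L : x ≤ f(u)} for u ∈ O(X), with restriction maps Φ(f)(u) → Φ(f)(v), x ↦ x ∧ f(v), for v ≤ u, each Φ(f)(u) ordered as a subposet of L. Then Φ(f) is a frame sheaf on O(X): it is a sheaf, each Φ(f)(u) is a frame, (POS3) holds, each restriction map is surjective with left adjoint the inclusion Φ(f)(v) ⊆ Φ(f)(u) and has a right adjoint, and the Frobenius condition holds. -/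
universe u v w

variable {X : Type u} [Order.Frame X] {L : Type v} [Order.Frame L]

/-- The sheaf `Φ(f)` associated to a frame homomorphism `f : O(X) → L`:
`Φ(f)(u) = {x ∈ L : x ≤ f u}`. -/
abbrev Phi (f : FrameHom X L) (a : X) : Type v := Set.Iic (f a)



/-- The restriction maps of `Φ(f)`: `x ↦ x ∧ f v`. -/
def PhiRes (f : FrameHom X L) {a b : X} (_h : b ≤ a) (x : Phi f a) : Phi f b :=
  ⟨(x : L) ⊓ f b, Set.mem_Iic.mpr inf_le_right⟩

/-- The inclusion `Φ(f)(v) ⊆ Φ(f)(u)` for `v ≤ u`. -/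
def PhiIncl (f : FrameHom X L) {a b : X} (h : b ≤ a) (y : Phi f b) : Phi f a :=
  ⟨(y : L), Set.mem_Iic.mpr (le_trans (Set.mem_Iic.mp y.2) (OrderHomClass.mono f h))⟩

/-- For a frame homomorphism `f : O(X) → L`, the presheaf
`Φ(f)(u) = {x ∈ L : x ≤ f u}` with restrictions `x ↦ x ∧ f v` is a frame sheaf
on `O(X)`: it is a sheaf, each `Φ(f)(u)` is a frame, (POS3) holds, each
restriction map is monotone and surjective, has the inclusion as left adjoint
and has a right adjoint, and the Frobenius condition holds. -/
theorem Phi_isFrameSheaf (f : FrameHom X L) :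
    -- presheaf laws
    (∀ (a : X) (x : Phi f a), PhiRes f (le_refl a) x = x) ∧
    (∀ {a b c : X} (h₁ : c ≤ b) (h₂ : b ≤ a) (x : Phi f a),
        PhiRes f h₁ (PhiRes f h₂ x) = PhiRes f (h₁.trans h₂) x) ∧
    -- restriction maps are order-preserving
    (∀ {a b : X} (h : b ≤ a), Monotone (PhiRes f h)) ∧
    -- the sheaf condition
    (∀ {ι : Type w} (c : ι → X) (s : ∀ i, Phi f (c i)),
        (∀ i j, PhiRes f (inf_le_left : c i ⊓ c j ≤ c i) (s i)
              = PhiRes f (inf_le_right : c i ⊓ c j ≤ c j) (s j)) →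
        ∃! t : Phi f (⨆ i, c i), ∀ i, PhiRes f (le_iSup c i) t = s i) ∧
    -- (POS3)
    (∀ {ι : Type w} (c : ι → X) (s t : ∀ i, Phi f (c i)),
        (∀ i j, PhiRes f (inf_le_left : c i ⊓ c j ≤ c i) (s i)
              = PhiRes f (inf_le_right : c i ⊓ c j ≤ c j) (s j)) →
        (∀ i j, PhiRes f (inf_le_left : c i ⊓ c j ≤ c i) (t i)
              = PhiRes f (inf_le_right : c i ⊓ c j ≤ c j) (t j)) →
        (∀ i, s i ≤ t i) →
        ∀ (p q : Phi f (⨆ i, c i)),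
          (∀ i, PhiRes f (le_iSup c i) p = s i) →
          (∀ i, PhiRes f (le_iSup c i) q = t i) → p ≤ q) ∧
    -- each `Φ(f)(u)` is a frame (complete lattice satisfying distributivity)
    (∀ (a : X) (x : Phi f a) (A : Set (Phi f a)), x ⊓ sSup A = ⨆ y ∈ A, x ⊓ y) ∧
    -- each restriction map is surjective
    (∀ {a b : X} (h : b ≤ a), Function.Surjective (PhiRes f h)) ∧
    -- the inclusion is left adjoint to the restriction map
    (∀ {a b : X} (h : b ≤ a) (y : Phi f b) (z : Phi f a),
        PhiIncl f h y ≤ z ↔ y ≤ PhiRes f h z) ∧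
    -- each restriction map has a right adjoint
    (∀ {a b : X} (h : b ≤ a), ∃ r : Phi f b → Phi f a,
        ∀ (x : Phi f a) (y : Phi f b), PhiRes f h x ≤ y ↔ x ≤ r y) ∧
    -- the Frobenius condition
    (∀ {a b : X} (h : b ≤ a) (x : Phi f a) (y : Phi f b),
        x ⊓ PhiIncl f h y = PhiIncl f h (PhiRes f h x ⊓ y)) := by
  have hres : ∀ {a b : X} (h : b ≤ a) (x : Phi f a), ((PhiRes f h x : L)) = (x:L) ⊓ f b :=
    fun _ _ => rfl
  refine ⟨?_, ?_, ?_, ?_, ?_, ?_, ?_, ?_, ?_, ?_⟩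
  · intro a x
    exact Subtype.ext (inf_eq_left.mpr x.2)
  · intro a b c h₁ h₂ x
    apply Subtype.ext
    show ((x:L) ⊓ f b) ⊓ f c = (x:L) ⊓ f c
    rw [inf_assoc, inf_eq_right.mpr (OrderHomClass.mono f h₁)]
  · intro a b h x y hxy
    exact inf_le_inf_right _ hxy
  · intro ι c s hcomp
    have hsub : (⨆ i, (s i : L)) ≤ f (⨆ i, c i) :=
      iSup_le fun i => (s i).2.trans (OrderHomClass.mono f (le_iSup c i))
    have key : ∀ i, (⨆ j, (s j : L)) ⊓ f (c i) = (s i : L) := by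
      intro i
      apply le_antisymm
      · rw [iSup_inf_eq]
        refine iSup_le fun j => ?_
        have h1 : (s j : L) ⊓ f (c i) = (s j : L) ⊓ f (c j ⊓ c i) := by
          rw [map_inf, ← inf_assoc, inf_eq_left.mpr (s j).2]
        have h2 := congrArg Subtype.val (hcomp j i)
        simp only [hres] at h2
        calc (s j : L) ⊓ f (c i) = (s i : L) ⊓ f (c j ⊓ c i) := by
              rw [h1]; rw [inf_comm (c j) (c i)] at h2 ⊢
              exact h2.symm ▸ h2
          _ ≤ (s i : L) := inf_le_left
      · exact le_inf (le_iSup (fun j => (s j : L)) i) (s i).2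
    have key2 : ∀ (x : L), (∀ i, x ⊓ f (c i) = (s i : L)) →
        x ⊓ f (⨆ i, c i) = ⨆ i, (s i : L) := by
      intro x hx
      rw [map_iSup, inf_iSup_eq]
      exact iSup_congr hx
    refine ⟨⟨⨆ i, (s i : L), hsub⟩, fun i => Subtype.ext (key i), ?_⟩
    intro t ht
    apply Subtype.ext
    exact (inf_eq_left.mpr t.2).symm.trans
      (key2 _ fun i => congrArg Subtype.val (ht i))
  · intro ι c s t hs ht hst p q hp hq
    show (p : L) ≤ (q : L)
    have key2 : ∀ (x : L) (w : ∀ i, Phi f (c i)), (∀ i, x ⊓ f (c i) = (w i : L)) →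
        x ⊓ f (⨆ i, c i) = ⨆ i, (w i : L) := by
      intro x w hx
      rw [map_iSup, inf_iSup_eq]
      exact iSup_congr hx
    have hp' : (p : L) = ⨆ i, (s i : L) :=
      (inf_eq_left.mpr p.2).symm.trans (key2 _ _ fun i => congrArg Subtype.val (hp i))
    have hq' : (q : L) = ⨆ i, (t i : L) :=
      (inf_eq_left.mpr q.2).symm.trans (key2 _ _ fun i => congrArg Subtype.val (hq i))
    rw [hp', hq']
    exact iSup_mono fun i => hst i
  · intro a x A
    apply le_antisymm
    · show ((x ⊓ sSup A : Phi f a) : L) ≤ _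
      have : ((x ⊓ sSup A : Phi f a) : L) = (x : L) ⊓ sSup ((↑) '' A) := rfl
      rw [this, sSup_image, inf_iSup₂_eq]
      refine iSup₂_le fun y hy => ?_
      have : (x : L) ⊓ (y : L) ≤ ((⨆ z ∈ A, x ⊓ z : Phi f a) : L) :=
        le_trans (le_of_eq rfl)
          (Subtype.coe_le_coe.mpr (le_iSup₂ (f := fun z _ => x ⊓ z) y hy))
      exact this
    · refine iSup₂_le fun y hy => inf_le_inf_left x (le_sSup hy)
  · intro a b h y
    exact ⟨PhiIncl f h y, Subtype.ext (inf_eq_left.mpr y.2)⟩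
  · intro a b h y z
    constructor
    · intro hyz
      show (y : L) ≤ (z : L) ⊓ f b
      exact le_inf hyz y.2
    · intro hyz
      show (y : L) ≤ (z : L)
      exact le_trans (show (y:L) ≤ (z:L) ⊓ f b from hyz) inf_le_left
  · intro a b h
    refine ⟨fun y => ⟨(f b ⇨ (y : L)) ⊓ f a, inf_le_right⟩, fun x y => ?_⟩
    constructor
    · intro hx
      exact le_inf (le_himp_iff.mpr hx) x.2
    · intro hx
      calc (x : L) ⊓ f b ≤ ((f b ⇨ (y:L)) ⊓ f a) ⊓ f b := inf_le_inf_right _ hx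
        _ ≤ (f b ⇨ (y:L)) ⊓ f b := inf_le_inf_right _ inf_le_left
        _ ≤ (y : L) := himp_inf_le
  · intro a b h x y
    apply Subtype.ext
    show (x : L) ⊓ (y : L) = ((x : L) ⊓ f b) ⊓ (y : L)
    rw [inf_assoc, inf_eq_right.mpr y.2]
end

section
/- Let P be a presheaf of sets on a frame O(X). Then Λ(P) is a subframe of the product frame ∏_{s ∈ ⨿P} ↓u_s: it contains the families (x ∧ u_s)_s for every x ∈ O(X), and it is closed under arbitrary pointwise joins and finite pointwise meets (in particular Λ(P) is a frame under the pointwise order). Moreover, the map p* : O(X) → Λ(P), x ↦ (x ∧ u_s)_{s ∈ ⨿P}, is a frame homomorphism (preserving finite meets, top, and arbitrary joins). -/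
universe u v w

variable {X : Type u} [Order.Frame X]

/-- A presheaf of sets on a frame `X`. -/
structure Presheaf (X : Type u) [Order.Frame X] where
  obj : X → Type v
  res : ∀ {a b : X}, b ≤ a → obj a → obj b
  res_self : ∀ (a : X) (x : obj a), res (le_refl a) x = x
  res_comp : ∀ {a b c : X} (h₁ : c ≤ b) (h₂ : b ≤ a) (x : obj a),
    res h₁ (res h₂ x) = res (h₁.trans h₂) x

/-- `ε_P(s₁,…,sₙ)`: the join of all `w` below each `u_i` on which all the
`s_i` agree. -/
def Presheaf.eps (P : Presheaf.{u, v} X) {ι : Type w} (c : ι → X)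
    (s : ∀ i, P.obj (c i)) : X :=
  sSup {x | ∃ h : ∀ i, x ≤ c i, ∀ i j, P.res (h i) (s i) = P.res (h j) (s j)}

/-- The elements of a presheaf, as dependent pairs `(u, s)` with `s ∈ P(u)`. -/
abbrev Presheaf.Pt (P : Presheaf.{u, v} X) := Σ a : X, P.obj a

/-- `ε_P(s, t) = ⋁{w ≤ u_s ∧ u_t : s|_w = t|_w}` for elements `s, t` of `P`. -/
def Presheaf.eps2 (P : Presheaf.{u, v} X) (s t : P.Pt) : X :=
  sSup {x | ∃ (h₁ : x ≤ s.1) (h₂ : x ≤ t.1), P.res h₁ s.2 = P.res h₂ t.2}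

/-- `Λ(P)`: the set of functions `f : ⨿P → O(X)` with `f s ≤ u_s` and
`f s ∧ ε_P(s,t) = f t ∧ ε_P(s,t)` for all `s, t`. -/
def Presheaf.Lambda (P : Presheaf.{u, v} X) : Set (P.Pt → X) :=
  {f | (∀ s : P.Pt, f s ≤ s.1) ∧
       ∀ s t : P.Pt, f s ⊓ P.eps2 s t = f t ⊓ P.eps2 s t}

/-- The canonical map `p* : O(X) → Λ(P)`, `x ↦ (x ∧ u_s)ₛ`. -/
def Presheaf.pstar (P : Presheaf.{u, v} X) (x : X) : P.Pt → X :=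
  fun s => x ⊓ s.1


lemma Presheaf.eps2_le_left (P : Presheaf.{u, v} X) (s t : P.Pt) : P.eps2 s t ≤ s.1 :=
  sSup_le fun _ ⟨h₁, _, _⟩ => h₁

lemma Presheaf.eps2_le_right (P : Presheaf.{u, v} X) (s t : P.Pt) : P.eps2 s t ≤ t.1 :=
  sSup_le fun _ ⟨_, h₂, _⟩ => h₂

/-- `Λ(P)` is a subframe of the product frame `∏ₛ ↓u_s`:
it contains all `p*(x)`, the top element, and is closed under pointwise binary
meets and arbitrary pointwise joins; and `p* : O(X) → Λ(P)` is a frame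
homomorphism. -/
theorem Lambda_subframe_and_pstar_frameHom (P : Presheaf.{u, v} X) :
    -- `Λ(P)` contains `p*(x)` for every `x`
    (∀ x : X, P.pstar x ∈ P.Lambda) ∧
    -- `Λ(P)` contains the top element of the product frame
    ((fun s : P.Pt => s.1) ∈ P.Lambda) ∧
    -- `Λ(P)` is closed under pointwise binary meets
    (∀ f g : P.Pt → X, f ∈ P.Lambda → g ∈ P.Lambda →
        (fun s => f s ⊓ g s) ∈ P.Lambda) ∧
    -- `Λ(P)` is closed under arbitrary pointwise joins
    (∀ A : Set (P.Pt → X), (∀ f ∈ A, f ∈ P.Lambda) →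
        (fun s => ⨆ f ∈ A, f s) ∈ P.Lambda) ∧
    -- `p*` preserves binary meets
    (∀ x y : X, P.pstar (x ⊓ y) = fun s => P.pstar x s ⊓ P.pstar y s) ∧
    -- `p*` preserves the top element
    (P.pstar (⊤ : X) = fun s : P.Pt => s.1) ∧
    -- `p*` preserves arbitrary joins
    (∀ {ι : Type w} (c : ι → X),
        P.pstar (⨆ i, c i) = fun s => ⨆ i, P.pstar (c i) s) := by
  refine ⟨?_, ?_, ?_, ?_, ?_, ?_, ?_⟩
  · intro x
    refine ⟨fun s => inf_le_right, fun s t => ?_⟩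
    simp only [Presheaf.pstar]
    rw [inf_assoc, inf_eq_right.mpr (P.eps2_le_left s t), inf_assoc,
      inf_eq_right.mpr (P.eps2_le_right s t)]
  · refine ⟨fun s => le_rfl, fun s t => ?_⟩
    rw [inf_eq_right.mpr (P.eps2_le_left s t), inf_eq_right.mpr (P.eps2_le_right s t)]
  · rintro f g ⟨hf1, hf2⟩ ⟨hg1, hg2⟩
    refine ⟨fun s => le_trans inf_le_left (hf1 s), fun s t => ?_⟩
    calc f s ⊓ g s ⊓ P.eps2 s t = (f s ⊓ P.eps2 s t) ⊓ (g s ⊓ P.eps2 s t) := by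
          rw [inf_inf_distrib_right]
      _ = (f t ⊓ P.eps2 s t) ⊓ (g t ⊓ P.eps2 s t) := by rw [hf2, hg2]
      _ = f t ⊓ g t ⊓ P.eps2 s t := by rw [← inf_inf_distrib_right]
  · intro A hA
    refine ⟨fun s => iSup₂_le fun f hf => (hA f hf).1 s, fun s t => ?_⟩
    rw [iSup_inf_eq, iSup_inf_eq]
    exact iSup_congr fun f => by
      rw [iSup_inf_eq, iSup_inf_eq]
      exact iSup_congr fun hf => (hA f hf).2 s t
  · intro x y; funext s; simp [Presheaf.pstar, inf_assoc, inf_left_comm]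
  · funext s; simp [Presheaf.pstar]
  · intro ι c; funext s; simp [Presheaf.pstar, iSup_inf_eq]
end

section
/- Let P be a presheaf of sets on a frame O(X) and let s ∈ P(u). Then the projection π_s : Λ(P) → ↓u, f ↦ f(s), is a surjective frame homomorphism (preserving finite meets, top, and arbitrary joins), and for all f, g ∈ Λ(P): g(s) ≤ f(s) if and only if g(t) ∧ ε_P(s, t) ≤ f(t) for every t ∈ ⨿P. -/
universe u v w

variable {X : Type u} [Order.Frame X]

lemma Presheaf.le_eps2_self (P : Presheaf.{u, v} X) (s : P.Pt) :
    s.1 ≤ P.eps2 s s :=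
  le_sSup ⟨le_refl _, le_refl _, rfl⟩

lemma Presheaf.eps2_triangle (P : Presheaf.{u, v} X) (s t r : P.Pt) :
    P.eps2 s t ⊓ P.eps2 t r ≤ P.eps2 s r := by
  rw [Presheaf.eps2, Presheaf.eps2, sSup_inf_sSup]
  refine iSup₂_le ?_
  rintro ⟨a, b⟩ ⟨⟨ha1, ha2, ha⟩, hb1, hb2, hb⟩
  refine le_sSup ⟨inf_le_left.trans ha1, inf_le_right.trans hb2, ?_⟩
  have e1 := congrArg (P.res (inf_le_left (a := a) (b := b))) ha
  have e2 := congrArg (P.res (inf_le_right (a := a) (b := b))) hb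
  rw [P.res_comp, P.res_comp] at e1
  rw [P.res_comp, P.res_comp] at e2
  calc P.res _ s.2 = P.res ((inf_le_left.trans ha2 : a ⊓ b ≤ t.1)) t.2 := e1
    _ = P.res _ r.2 := by
        have : (inf_le_left.trans ha2 : a ⊓ b ≤ t.1) =
            (inf_le_right.trans hb1) := rfl
        rw [this]; exact e2

/-- For `s ∈ P(u)`, the projection `π_s : Λ(P) → ↓u`,
`f ↦ f s`, is a surjective frame homomorphism, and for `f, g ∈ Λ(P)`:
`g s ≤ f s` iff `g t ∧ ε_P(s,t) ≤ f t` for every `t`. -/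
theorem Lambda_projection_frameHom (P : Presheaf.{u, v} X) (s : P.Pt) :
    -- `π_s` is surjective onto `↓u_s`
    (∀ y : X, y ≤ s.1 → ∃ f ∈ P.Lambda, f s = y) ∧
    -- `π_s` preserves the top element
    ((fun t : P.Pt => t.1) s = s.1) ∧
    -- `π_s` preserves pointwise binary meets
    (∀ f g : P.Pt → X, f ∈ P.Lambda → g ∈ P.Lambda →
        (fun t => f t ⊓ g t) s = f s ⊓ g s) ∧
    -- `π_s` preserves arbitrary pointwise joins
    (∀ A : Set (P.Pt → X), (∀ f ∈ A, f ∈ P.Lambda) →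
        (fun t => ⨆ f ∈ A, f t) s = ⨆ f ∈ A, f s) ∧
    -- the order characterization
    (∀ f g : P.Pt → X, f ∈ P.Lambda → g ∈ P.Lambda →
        (g s ≤ f s ↔ ∀ t : P.Pt, g t ⊓ P.eps2 s t ≤ f t)) := by

  constructor
  · -- surjectivity
    intro y hy
    refine ⟨fun t => y ⊓ P.eps2 s t, ⟨fun t => inf_le_right.trans (P.eps2_le_right s t), ?_⟩, ?_⟩
    · intro t r
      have h1 : P.eps2 s t ⊓ P.eps2 t r ≤ P.eps2 s r := P.eps2_triangle s t r
      have h2 : P.eps2 s r ⊓ P.eps2 r t ≤ P.eps2 s t := P.eps2_triangle s r t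
      have hsym : P.eps2 r t = P.eps2 t r := by
        apply le_antisymm <;>
        · refine sSup_le fun x ⟨h₁, h₂, h⟩ => le_sSup ⟨h₂, h₁, h.symm⟩
      rw [hsym] at h2
      apply le_antisymm
      · rw [inf_assoc]
        exact le_inf (le_inf inf_le_left ((inf_le_right).trans h1)) (inf_le_right.trans inf_le_right)
      · rw [inf_assoc]
        exact le_inf (le_inf inf_le_left ((inf_le_right).trans h2)) (inf_le_right.trans inf_le_right)
    · have : y ≤ P.eps2 s s := hy.trans (P.le_eps2_self s)
      exact inf_eq_left.mpr this
  refine ⟨rfl, fun f g _ _ => rfl, fun A _ => rfl, ?_⟩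
  intro f g hf hg
  constructor
  · intro h t
    calc g t ⊓ P.eps2 s t = g s ⊓ P.eps2 s t := (hg.2 s t).symm
      _ ≤ f s ⊓ P.eps2 s t := inf_le_inf_right _ h
      _ = f t ⊓ P.eps2 s t := hf.2 s t
      _ ≤ f t := inf_le_left
  · intro h
    have := h s
    rwa [inf_eq_left.mpr ((hg.1 s).trans (P.le_eps2_self s))] at this
end

section
/- Let F and G be presheaves of sets on a frame O(X) and α : F → G a morphism of presheaves (a family of maps α_u : F(u) → G(u) with α_v(x|_v) = α_u(x)|_v for v ≤ u). Then: (a) for all s ∈ F(u) and s' ∈ F(v), ε_F(s, s') ≤ ε_G(α_u(s), α_v(s')); (b) the map Λ(α)* : Λ(G) → Λ(F), sending f ∈ Λ(G) to the function s ↦ f(α_{u_s}(s)) on ⨿F, is well defined and is a frame homomorphism satisfying Λ(α)*(p_G*(x)) = p_F*(x) for all x ∈ O(X), where p_F*(x) = (x ∧ u_s)_{s ∈ ⨿F} and p_G*(x) = (x ∧ u_t)_{t ∈ ⨿G}. -/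
universe u v w

variable {X : Type u} [Order.Frame X]

/-- A morphism of presheaves. -/
structure Presheaf.Hom (F G : Presheaf.{u, v} X) where
  app : ∀ a, F.obj a → G.obj a
  natural : ∀ {a b : X} (h : b ≤ a) (x : F.obj a),
    app b (F.res h x) = G.res h (app a x)

/-- The action of a morphism of presheaves on elements. -/
def Presheaf.Hom.pt {F G : Presheaf.{u, v} X} (α : F.Hom G) (s : F.Pt) : G.Pt :=
  ⟨s.1, α.app s.1 s.2⟩

/-- For a morphism of presheaves `α : F → G`:
(a) `ε_F(s, s') ≤ ε_G(α s, α s')`; (b) the map `Λ(α)* : Λ(G) → Λ(F)`,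
`f ↦ f ∘ α`, is well defined and is a frame homomorphism commuting with the
canonical maps `p*`. -/
theorem Lambda_functorial (F G : Presheaf.{u, v} X) (α : F.Hom G) :
    -- (a)
    (∀ s t : F.Pt, F.eps2 s t ≤ G.eps2 (α.pt s) (α.pt t)) ∧
    -- (b) well definedness
    (∀ f : G.Pt → X, f ∈ G.Lambda → (fun s : F.Pt => f (α.pt s)) ∈ F.Lambda) ∧
    -- preserves the top element
    ((fun s : F.Pt => (fun t : G.Pt => t.1) (α.pt s)) = fun s : F.Pt => s.1) ∧
    -- preserves pointwise binary meets
    (∀ f g : G.Pt → X,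
        (fun s : F.Pt => (fun t => f t ⊓ g t) (α.pt s))
          = fun s : F.Pt => f (α.pt s) ⊓ g (α.pt s)) ∧
    -- preserves arbitrary pointwise joins
    (∀ A : Set (G.Pt → X),
        (fun s : F.Pt => (fun t => ⨆ f ∈ A, f t) (α.pt s))
          = fun s : F.Pt => ⨆ f ∈ A, f (α.pt s)) ∧
    -- compatibility with the canonical maps `p*`
    (∀ x : X, (fun s : F.Pt => G.pstar x (α.pt s)) = F.pstar x) := by
  have ha : ∀ s t : F.Pt, F.eps2 s t ≤ G.eps2 (α.pt s) (α.pt t) := by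
    intro s t
    apply sSup_le_sSup
    rintro x ⟨h₁, h₂, h⟩
    exact ⟨h₁, h₂, by
      show G.res h₁ (α.app s.1 s.2) = G.res h₂ (α.app t.1 t.2)
      rw [← α.natural h₁, ← α.natural h₂, h]⟩
  refine ⟨ha, ?_, rfl, fun f g => rfl, fun A => rfl, fun x => rfl⟩
  rintro f ⟨hb, hc⟩
  refine ⟨fun s => hb (α.pt s), fun s t => ?_⟩
  have h1 : f (α.pt s) ⊓ F.eps2 s t = f (α.pt s) ⊓ G.eps2 (α.pt s) (α.pt t) ⊓ F.eps2 s t := by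
    rw [inf_assoc, inf_eq_right.2 (ha s t)]
  have h2 : f (α.pt t) ⊓ F.eps2 s t = f (α.pt t) ⊓ G.eps2 (α.pt s) (α.pt t) ⊓ F.eps2 s t := by
    rw [inf_assoc, inf_eq_right.2 (ha s t)]
  rw [h1, h2, hc (α.pt s) (α.pt t)]
end
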